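/- arXiv:2303.04021 — 11 statements merged into one kernel-verified Lean document; each statement's English description precedes it below -/
import Mathlib

section
/- Let P ⊆ ℝ^m be a rational polytope, i.e. a bounded set of the form P = {x ∈ ℝ^m : A x^T ≤ b^T} with A a rational ℓ×m matrix and b a rational vector, and let f: ℝ^m → ℝ^k be a linear map whose matrix with respect to the standard bases has rational entries. Then f(P ∩ ℚ^m) = f(P) ∩ ℚ^k. -/
/-!
Fix `x₀ ∈ P` with `f x₀ = y` rational. The rows of `A` that are tight at `x₀`, together with the
equations `f x = y`, form a linear system with rational coefficients solved by `x₀`. If `G` is a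
rational matrix with `M G M = M`, the affine map `x ↦ x - G (M x - c)` retracts `ℝ^m` onto the
solutions of `M x = c` and sends rational points to rational points, so rational solutions are
dense among the real ones. One close enough to `x₀` still satisfies the loose inequalities strictly,
hence lies in `P`, and `f` sends it to `y`.
-/

open Matrix Filter Topology

theorem LinearMap.exists_comp_comp_eq_self {K V W : Type*} [DivisionRing K] [AddCommGroup V]
    [Module K V] [AddCommGroup W] [Module K W] (f : V →ₗ[K] W) :
    ∃ g : W →ₗ[K] V, f ∘ₗ g ∘ₗ f = f := by
  obtain ⟨s, hs⟩ := f.rangeRestrict.exists_rightInverse_of_surjective f.range_rangeRestrict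
  obtain ⟨g, hg⟩ := LinearMap.exists_extend s
  refine ⟨g, LinearMap.ext fun v => ?_⟩
  have hgf : g (f v) = s (f.rangeRestrict v) := congr($hg (f.rangeRestrict v))
  simpa [hgf] using congr(Subtype.val ($hs (f.rangeRestrict v)))

theorem Matrix.exists_mul_mul_eq_self {K m n : Type*} [Field K] [Fintype m] [Fintype n]
    [DecidableEq m] [DecidableEq n] (M : Matrix m n K) : ∃ G : Matrix n m K, M * G * M = M := by
  obtain ⟨g, hg⟩ := (toLin' M).exists_comp_comp_eq_self
  refine ⟨LinearMap.toMatrix' g, toLin'.injective ?_⟩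
  rw [toLin'_mul, toLin'_mul, toLin'_toMatrix', LinearMap.comp_assoc, hg]

theorem RingHom.comp_mulVec {R S m n : Type*} [NonAssocSemiring R] [NonAssocSemiring S] [Fintype n]
    (σ : R →+* S) (M : Matrix m n R) (v : n → R) : σ ∘ (M *ᵥ v) = M.map σ *ᵥ (σ ∘ v) :=
  funext (σ.map_mulVec M v)

theorem mem_closure_image_mulVec_eq {K L ι κ : Type*} [Field K] [CommRing L] [Nontrivial L]
    [TopologicalSpace L] [IsTopologicalRing L] [Fintype ι] [Fintype κ] {σ : K →+* L}
    (hσ : DenseRange σ) (M : Matrix ι κ K) (c : ι → K) {x : κ → L}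
    (hx : M.map σ *ᵥ x = σ ∘ c) : x ∈ closure ((σ ∘ ·) '' {q | M *ᵥ q = c}) := by
  classical
  obtain ⟨G, hG⟩ := M.exists_mul_mul_eq_self
  have hMGc : (M * G) *ᵥ c = c := by
    refine σ.injective.comp_left ?_
    calc σ ∘ ((M * G) *ᵥ c) = (M * G).map σ *ᵥ M.map σ *ᵥ x := by rw [σ.comp_mulVec, hx]
      _ = σ ∘ c := by rw [mulVec_mulVec, ← Matrix.map_mul, hG, hx]
  -- a continuous retraction onto the solution set that maps `K`-points to `K`-points
  set Φ : (κ → L) → (κ → L) := fun y => y - G.map σ *ᵥ (M.map σ *ᵥ y - σ ∘ c)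
  have hΦx : Φ x = x := by simp [Φ, hx]
  have hΦ : Continuous Φ := by fun_prop
  have hΦmaps : Set.MapsTo Φ (Set.range (σ ∘ ·)) ((σ ∘ ·) '' {q | M *ᵥ q = c}) := by
    rintro _ ⟨q, rfl⟩
    refine ⟨q - G *ᵥ (M *ᵥ q - c), ?_, ?_⟩
    · rw [Set.mem_ofPred_eq, mulVec_sub, mulVec_mulVec, mulVec_sub, mulVec_mulVec, hG, hMGc,
        sub_sub_cancel]
    · ext i
      simp [Φ, σ.map_mulVec, Function.comp_def, Pi.sub_def]
  have hdense : x ∈ closure (Set.range (σ ∘ · : (κ → K) → κ → L)) :=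
    DenseRange.piMap (fun _ => hσ) x
  simpa [hΦx] using hΦ.continuousWithinAt.mem_closure hdense hΦmaps

theorem mem_closure_rat_polyhedron {ι ι' κ : Type*} [Fintype ι] [Fintype ι'] [Fintype κ]
    (A : Matrix ι κ ℚ) (b : ι → ℚ) (F : Matrix ι' κ ℚ) (y : ι' → ℚ) {x : κ → ℝ}
    (hxA : A.map (↑) *ᵥ x ≤ (↑) ∘ b) (hxF : F.map (↑) *ᵥ x = (↑) ∘ y) :
    x ∈ closure ((fun q : κ → ℚ => ((↑) ∘ q : κ → ℝ)) '' {q | A *ᵥ q ≤ b ∧ F *ᵥ q = y}) := by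
  let σ := Rat.castHom ℝ
  let T := {i // ¬ (A.map σ *ᵥ x) i < b i}
  let M := (A.submatrix Subtype.val id : Matrix T κ ℚ).fromRows F
  let c := Sum.elim (b ∘ Subtype.val : T → ℚ) y
  have hMx : M.map σ *ᵥ x = σ ∘ c := by
    rw [fromRows_map, fromRows_mulVec, Sum.comp_elim, Sum.elim_eq_iff]
    exact ⟨funext fun i => (hxA i.1).antisymm (not_lt.1 i.2), hxF⟩
  have hloose : ∀ᶠ z in 𝓝 x, ∀ i, (A.map σ *ᵥ x) i < b i → (A.map σ *ᵥ z) i < b i :=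
    eventually_all.2 fun i => eventually_imp_distrib_left.2 fun hi =>
      (by fun_prop : Continuous fun z : κ → ℝ => (A.map σ *ᵥ z) i).continuousAt.eventually_lt
        continuousAt_const hi
  have hsol := mem_closure_image_mulVec_eq Rat.denseRange_cast M c hMx
  refine closure_mono ?_ (mem_closure_iff_frequently.2
    ((mem_closure_iff_frequently.1 hsol).and_eventually hloose))
  rintro _ ⟨⟨q, hq, rfl⟩, hqx⟩
  rw [Set.mem_ofPred_eq, fromRows_mulVec, Sum.elim_eq_iff] at hq
  refine ⟨q, ⟨fun i => ?_, hq.2⟩, rfl⟩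
  by_cases hi : (A.map σ *ᵥ x) i < b i
  · have hqi := hqx i hi
    rw [← σ.comp_mulVec] at hqi
    exact (Rat.cast_lt.1 hqi).le
  · exact (congrFun hq.1 ⟨i, hi⟩).le

theorem stmt1_general {m k l : ℕ}
    (A : Matrix (Fin l) (Fin m) ℝ) (b : Fin l → ℝ)
    (hA : ∀ i j, ∃ q : ℚ, A i j = (q : ℝ)) (hb : ∀ i, ∃ q : ℚ, b i = (q : ℝ))
    (P : Set (Fin m → ℝ)) (hP : P = {x | ∀ i, ∑ j, A i j * x j ≤ b i})
    (f : (Fin m → ℝ) →ₗ[ℝ] (Fin k → ℝ))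
    (hf : ∀ j i, ∃ q : ℚ, f (Pi.single j 1) i = (q : ℝ)) :
    f '' (P ∩ {x | ∀ j, ∃ q : ℚ, x j = (q : ℝ)}) =
      (f '' P) ∩ {y | ∀ i, ∃ q : ℚ, y i = (q : ℝ)} := by
  choose A' hA' using hA
  choose b' hb' using hb
  choose F hF using fun i j => hf j i
  obtain rfl : A = (Matrix.of A').map (↑) := Matrix.ext hA'
  obtain rfl : b = (↑) ∘ b' := funext hb'
  have hf_eq : ∀ x, f x = (Matrix.of F).map (↑) *ᵥ x := fun x => by
    rw [← LinearMap.toMatrix'_mulVec]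
    congr 1
    exact Matrix.ext fun i j => by rw [LinearMap.toMatrix'_apply, hF]; rfl
  subst hP
  ext y
  constructor
  · rintro ⟨x, ⟨hxP, hxQ⟩, rfl⟩
    choose q hq using hxQ
    obtain rfl : x = (↑) ∘ q := funext hq
    refine ⟨⟨_, hxP, rfl⟩, fun i => ⟨(Matrix.of F *ᵥ q) i, ?_⟩⟩
    rw [hf_eq]
    exact ((Rat.castHom ℝ).map_mulVec _ q i).symm
  · rintro ⟨⟨x, hxP, rfl⟩, hy⟩
    choose y' hy' using hy
    obtain ⟨_, q, ⟨hqA, hqF⟩, rfl⟩ := closure_nonempty_iff.1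
      ⟨x, mem_closure_rat_polyhedron A' b' _ y' hxP ((hf_eq x).symm.trans (funext hy'))⟩
    refine ⟨_, ⟨fun i => ?_, fun j => ⟨q j, rfl⟩⟩, ?_⟩
    · exact ((Rat.castHom ℝ).map_mulVec _ q i).symm.trans_le (Rat.cast_le.2 (hqA i))
    · calc f ((↑) ∘ q) = (↑) ∘ (Matrix.of F *ᵥ q) :=
            (hf_eq _).trans ((Rat.castHom ℝ).comp_mulVec _ q).symm
        _ = f x := by rw [hqF]; exact (funext hy').symm

/-- If `P` is a rational polytope and `f` a rational linear map, then
`f(P ∩ ℚ^m) = f(P) ∩ ℚ^k`. -/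
theorem stmt1 {m k l : ℕ}
    (A : Matrix (Fin l) (Fin m) ℝ) (b : Fin l → ℝ)
    (hA : ∀ i j, ∃ q : ℚ, A i j = (q : ℝ)) (hb : ∀ i, ∃ q : ℚ, b i = (q : ℝ))
    (P : Set (Fin m → ℝ)) (hP : P = {x | ∀ i, ∑ j, A i j * x j ≤ b i})
    (hbdd : Bornology.IsBounded P)
    (f : (Fin m → ℝ) →ₗ[ℝ] (Fin k → ℝ))
    (hf : ∀ j i, ∃ q : ℚ, f (Pi.single j 1) i = (q : ℝ)) :
    f '' (P ∩ {x | ∀ j, ∃ q : ℚ, x j = (q : ℝ)}) =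
      (f '' P) ∩ {y | ∀ i, ∃ q : ℚ, y i = (q : ℝ)} :=
  stmt1_general A b hA hb P hP f hf
end

section
/- Let P ⊆ ℝ^m be a down-monotone polytope, i.e. P is the convex hull of a finite set of points, P ⊆ ℝ_{≥0}^m, and whenever x ∈ P and 0 ≤ y ≤ x componentwise, also y ∈ P. Then P equals the closure (in the Euclidean topology of ℝ^m) of P ∩ ℚ^m. -/
/-!
A point `x` of `P` is approximated from below: every `y` with rational coordinates and
`0 ≤ y ≤ x` lies in `P` by down-monotonicity, and such `y` are dense in the box `[0, x]`.
Conversely, a polytope is compact, hence closed.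
-/

open Set

lemma mem_closure_Icc_inter_range_ratCast {a : ℝ} (ha : 0 ≤ a) :
    a ∈ closure (Icc 0 a ∩ range ((↑) : ℚ → ℝ)) := by
  rcases ha.eq_or_lt with rfl | ha
  · exact subset_closure ⟨left_mem_Icc.2 le_rfl, 0, Rat.cast_zero⟩
  · have hIoo : Ioo 0 a ⊆ closure (Ioo 0 a ∩ range ((↑) : ℚ → ℝ)) :=
      Rat.denseRange_cast.open_subset_closure_inter isOpen_Ioo
    have ha_mem : a ∈ closure (Ioo 0 a) := by
      rw [closure_Ioo ha.ne]
      exact right_mem_Icc.2 ha.le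
    exact closure_mono (inter_subset_inter_left _ Ioo_subset_Icc_self)
      (closure_minimal hIoo isClosed_closure ha_mem)

lemma subset_closure_inter_rat_of_downMonotone {ι : Type*} {P : Set (ι → ℝ)}
    (hnonneg : ∀ x ∈ P, ∀ j, 0 ≤ x j)
    (hdown : ∀ x ∈ P, ∀ y : ι → ℝ, (∀ j, 0 ≤ y j) → (∀ j, y j ≤ x j) → y ∈ P) :
    P ⊆ closure (P ∩ {x | ∀ j, ∃ q : ℚ, x j = (q : ℝ)}) := by
  intro x hx
  have hbox : univ.pi (fun j => Icc 0 (x j) ∩ range ((↑) : ℚ → ℝ)) ⊆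
      P ∩ {x | ∀ j, ∃ q : ℚ, x j = (q : ℝ)} := fun y hy =>
    ⟨hdown x hx y (fun j => (hy j trivial).1.1) (fun j => (hy j trivial).1.2),
      fun j => (hy j trivial).2.imp fun _ hq => hq.symm⟩
  refine closure_mono hbox ?_
  rw [closure_pi_set]
  exact fun j _ => mem_closure_Icc_inter_range_ratCast (hnonneg x hx j)

/-- A down-monotone polytope equals the closure of its set of rational points. -/
theorem stmt3 {m : ℕ} (P : Set (Fin m → ℝ))
    (hpoly : ∃ S : Finset (Fin m → ℝ), P = convexHull ℝ ↑S)
    (hnonneg : ∀ x ∈ P, ∀ j, 0 ≤ x j)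
    (hdown : ∀ x ∈ P, ∀ y : Fin m → ℝ, (∀ j, 0 ≤ y j) → (∀ j, y j ≤ x j) → y ∈ P) :
    P = closure (P ∩ {x | ∀ j, ∃ q : ℚ, x j = (q : ℝ)}) := by
  have hclosed : IsClosed P := by
    obtain ⟨S, rfl⟩ := hpoly
    exact (S.finite_toSet.isCompact_convexHull ℝ).isClosed
  exact (subset_closure_inter_rat_of_downMonotone hnonneg hdown).antisymm
    (closure_minimal inter_subset_left hclosed)
end

section
/- Let R be a G-system. Then λ²(R) ≤ ((k−1)/k)·λ*(R)·λ(R) + λ(R)²/k, where λ²(R) = max{ λ_1² + ... + λ_k² : λ ∈ Λ(R) } is the second max-sum capacity, λ(R) = max{ λ_1 + ... + λ_k : λ ∈ Λ(R) } is the max-sum capacity, and λ*(R) = max_{1≤i≤k} max{ x : x e_i ∈ Λ(R) }. -/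
/-!
Take `λ ∈ Λ(𝓡)` attaining `λ²(𝓡)` and put `L = ∑ λ_i ≤ λ(𝓡)`. Serving only the requests of
object `i` shows `λ_i e_i ∈ Λ(𝓡)`, so `0 ≤ λ_i ≤ λ*(𝓡)`; also `λ_i ≤ L`. Hence
`∑ λ_i² ≤ min(λ*, L) · L`, and `min(λ*, L)` is at most the convex combination
`((k-1)/k) λ* + L/k`. The resulting bound is monotone in `L`.
-/

open Matrix

/-- The ν-th column of a matrix. -/
def matCol {F : Type} [Field F] {k n : ℕ} (G : Matrix (Fin k) (Fin n) F) (ν : Fin n) :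
    Fin k → F :=
  fun r => G r ν

/-- `R ⊆ {1,...,n}` is a recovery set for object `i` if `e_i` lies in the span of the
columns of `G` indexed by `R`. -/
def IsRecoverySet {F : Type} [Field F] {k n : ℕ} (G : Matrix (Fin k) (Fin n) F)
    (i : Fin k) (R : Finset (Fin n)) : Prop :=
  Pi.single i (1 : F) ∈ Submodule.span F (matCol G '' (R : Set (Fin n)))

/-- The service rate region of a system `𝓡 = (𝓡_1, ..., 𝓡_k)` with server capacity `μ`. -/
def SRR {k n : ℕ} (𝓡 : Fin k → Finset (Finset (Fin n))) (μ : ℝ) : Set (Fin k → ℝ) :=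
  {lam | ∃ x : Fin k → Finset (Fin n) → ℝ,
    (∀ i, ∀ R ∈ 𝓡 i, 0 ≤ x i R) ∧
    (∀ i, ∑ R ∈ 𝓡 i, x i R = lam i) ∧
    (∀ ν : Fin n, ∑ i, ∑ R ∈ 𝓡 i, (if ν ∈ R then x i R else 0) ≤ μ)}

open Finset

namespace SRR

variable {k n : ℕ} {𝓡 : Fin k → Finset (Finset (Fin n))} {μ : ℝ} {lam : Fin k → ℝ}

theorem nonneg (h : lam ∈ SRR 𝓡 μ) (i : Fin k) : 0 ≤ lam i := by
  obtain ⟨x, hx0, hxsum, -⟩ := h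
  rw [← hxsum i]
  exact sum_nonneg (hx0 i)

theorem single_mem (h : lam ∈ SRR 𝓡 μ) (i : Fin k) : Pi.single i (lam i) ∈ SRR 𝓡 μ := by
  obtain ⟨x, hx0, hxsum, hxcap⟩ := h
  have hle : ∀ j, ∀ R ∈ 𝓡 j, (if j = i then x j R else 0) ≤ x j R := fun j R hR => by
    split_ifs
    exacts [le_rfl, hx0 j R hR]
  refine ⟨fun j R => if j = i then x j R else 0, ?_, ?_, fun ν => (hxcap ν).trans' ?_⟩
  · intro j R hR
    dsimp only
    split_ifs
    exacts [hx0 j R hR, le_rfl]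
  · intro j
    by_cases hj : j = i
    · subst hj; simpa using hxsum j
    · simp [hj]
  · refine sum_le_sum fun j _ => sum_le_sum fun R hR => ?_
    by_cases hν : ν ∈ R <;> simp only [hν, if_true, if_false, hle j R hR, le_rfl]

end SRR

theorem sum_sq_le_of_nonneg_of_le {ι : Type*} [Fintype ι] {a : ι → ℝ} {M : ℝ}
    (h0 : ∀ i, 0 ≤ a i) (hM : ∀ i, a i ≤ M) :
    ∑ i, a i ^ 2 ≤ ((Fintype.card ι : ℝ) - 1) / Fintype.card ι * M * ∑ i, a i
      + (∑ i, a i) ^ 2 / Fintype.card ι := by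
  cases isEmpty_or_nonempty ι
  · simp
  set L := ∑ i, a i
  have hk : (1 : ℝ) ≤ Fintype.card ι := by exact_mod_cast Fintype.card_pos
  have hle_L : ∀ i, a i ≤ L := fun i => single_le_sum (fun j _ => h0 j) (mem_univ i)
  have hmin : min M L ≤ ((Fintype.card ι : ℝ) - 1) / Fintype.card ι * M + L / Fintype.card ι := by
    rw [div_mul_eq_mul_div, ← add_div, le_div_iff₀ (by linarith)]
    nlinarith [min_le_left M L, min_le_right M L]
  calc ∑ i, a i ^ 2 ≤ ∑ i, min M L * a i := by
        gcongr with i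
        rw [sq]
        exact mul_le_mul_of_nonneg_right (le_min (hM i) (hle_L i)) (h0 i)
    _ = min M L * L := (mul_sum ..).symm
    _ ≤ (((Fintype.card ι : ℝ) - 1) / Fintype.card ι * M + L / Fintype.card ι) * L :=
        mul_le_mul_of_nonneg_right hmin (sum_nonneg fun i _ => h0 i)
    _ = _ := by ring

theorem stmt6_general {k n : ℕ}
    (𝓡 : Fin k → Finset (Finset (Fin n)))
    -- `lam2 = λ²(𝓡)`, the second max-sum capacity
    (lam2 : ℝ) (hlam2 : IsGreatest {y : ℝ | ∃ lam ∈ SRR 𝓡 1, y = ∑ i, (lam i) ^ 2} lam2)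
    -- `lmax = λ(𝓡)`, the max-sum capacity
    (lmax : ℝ) (hlmax : IsGreatest {y : ℝ | ∃ lam ∈ SRR 𝓡 1, y = ∑ i, lam i} lmax)
    -- `lstar = λ*(𝓡) = max_i max {x | x e_i ∈ Λ(𝓡)}`
    (lstar : ℝ)
    (hlstar : IsGreatest {x : ℝ | ∃ i : Fin k, Pi.single i x ∈ SRR 𝓡 1} lstar) :
    lam2 ≤ ((k : ℝ) - 1) / (k : ℝ) * lstar * lmax + lmax ^ 2 / (k : ℝ) := by
  obtain ⟨lam, hlam, rfl⟩ := hlam2.1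
  obtain ⟨i₀, hi₀⟩ := hlstar.1
  have hk : (1 : ℝ) ≤ k := by exact_mod_cast i₀.pos
  have hcoeff : 0 ≤ ((k : ℝ) - 1) / k := div_nonneg (by linarith) (by linarith)
  have hstar : 0 ≤ lstar := by simpa using SRR.nonneg hi₀ i₀
  have hL : 0 ≤ ∑ i, lam i := sum_nonneg fun i _ => SRR.nonneg hlam i
  have hLmax : ∑ i, lam i ≤ lmax := hlmax.2 ⟨lam, hlam, rfl⟩
  calc ∑ i, lam i ^ 2 ≤ ((k : ℝ) - 1) / k * lstar * ∑ i, lam i + (∑ i, lam i) ^ 2 / k := by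
        simpa using sum_sq_le_of_nonneg_of_le (SRR.nonneg hlam)
          fun i => hlstar.2 ⟨i, SRR.single_mem hlam i⟩
    _ ≤ ((k : ℝ) - 1) / k * lstar * lmax + lmax ^ 2 / k := by gcongr

theorem stmt6 {F : Type} [Field F] [Fintype F] {k n : ℕ} (hk : 2 ≤ k) (hkn : k < n)
    (G : Matrix (Fin k) (Fin n) F) (hrank : G.rank = k)
    (hcol : ∀ ν, matCol G ν ≠ 0)
    (𝓡 : Fin k → Finset (Finset (Fin n)))
    (hne : ∀ i, (𝓡 i).Nonempty)
    (hrec : ∀ i, ∀ R ∈ 𝓡 i, IsRecoverySet G i R)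
    -- `lam2 = λ²(𝓡)`, the second max-sum capacity
    (lam2 : ℝ) (hlam2 : IsGreatest {y : ℝ | ∃ lam ∈ SRR 𝓡 1, y = ∑ i, (lam i) ^ 2} lam2)
    -- `lmax = λ(𝓡)`, the max-sum capacity
    (lmax : ℝ) (hlmax : IsGreatest {y : ℝ | ∃ lam ∈ SRR 𝓡 1, y = ∑ i, lam i} lmax)
    -- `lstar = λ*(𝓡) = max_i max {x | x e_i ∈ Λ(𝓡)}`
    (lstar : ℝ)
    (hlstar : IsGreatest {x : ℝ | ∃ i : Fin k, Pi.single i x ∈ SRR 𝓡 1} lstar) :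
    lam2 ≤ ((k : ℝ) - 1) / (k : ℝ) * lstar * lmax + lmax ^ 2 / (k : ℝ) :=
  stmt6_general 𝓡 lam2 hlam2 lmax hlmax lstar hlstar
end

section
/- Let λ = (λ_1,...,λ_k) ∈ Λ(G), let I ⊆ {1,...,k}, and let φ: F_q^k → F_q be a nonzero linear functional such that φ(e_i) ≠ 0 for every i ∈ I (i.e. the hyperplane H = ker φ contains none of the standard basis vectors e_i with i ∈ I). Then ∑_{i∈I} λ_i ≤ |{ν ∈ {1,...,n} : φ(G^ν) ≠ 0}|, the number of columns of G not lying in H. -/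
open Matrix

/-- The service rate region `Λ(G)` of the system given by all recovery sets of `G`,
with server capacity `1`: the allocation `x i R` is required to vanish on non-recovery
sets, so all sums effectively range over the recovery sets of each object. -/
def SRRG {F : Type} [Field F] {k n : ℕ} (G : Matrix (Fin k) (Fin n) F) :
    Set (Fin k → ℝ) :=
  {lam | ∃ x : Fin k → Finset (Fin n) → ℝ,
    (∀ i R, 0 ≤ x i R) ∧
    (∀ i R, ¬ IsRecoverySet G i R → x i R = 0) ∧
    (∀ i, ∑ R : Finset (Fin n), x i R = lam i) ∧
    (∀ ν : Fin n, ∑ i, ∑ R : Finset (Fin n), (if ν ∈ R then x i R else 0) ≤ 1)}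

open Finset

/- Each unit of demand for object `i ∈ I` is served by a recovery set, whose columns span `e_i`;
since `φ(e_i) ≠ 0`, some column of that set lies outside `ker φ`. Charging the demand to such a
column, the total demand of `I` is at most the total load on the columns outside `ker φ`, and each
of them carries load at most `1`. -/

lemma IsRecoverySet.exists_mem_apply_ne_zero {F : Type} [Field F] {k n : ℕ}
    {G : Matrix (Fin k) (Fin n) F} {i : Fin k} {R : Finset (Fin n)} (hR : IsRecoverySet G i R)
    {φ : (Fin k → F) →ₗ[F] F} (hi : φ (Pi.single i 1) ≠ 0) :
    ∃ ν ∈ R, φ (matCol G ν) ≠ 0 := by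
  by_contra! h
  refine hi (LinearMap.mem_ker.mp (Submodule.span_le.mpr ?_ hR))
  rintro _ ⟨ν, hν, rfl⟩
  exact h ν hν

lemma le_sum_ite_mem_of_exists_mem {σ : Type*} [DecidableEq σ] {a : ℝ} (ha : 0 ≤ a)
    {R S : Finset σ} (hRS : a ≠ 0 → ∃ ν ∈ R, ν ∈ S) :
    a ≤ ∑ ν ∈ S, if ν ∈ R then a else 0 := by
  have hnonneg : ∀ ν ∈ S, 0 ≤ if ν ∈ R then a else 0 := fun ν _ => by split_ifs <;> simp [ha]
  rcases eq_or_ne a 0 with rfl | ha0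
  · exact sum_nonneg hnonneg
  · obtain ⟨ν, hνR, hνS⟩ := hRS ha0
    simpa [hνR] using single_le_sum hnonneg hνS

def allocationLoad {ι σ : Type*} [Fintype ι] [Fintype σ] [DecidableEq σ]
    (x : ι → Finset σ → ℝ) (ν : σ) : ℝ :=
  ∑ i, ∑ R, if ν ∈ R then x i R else 0

lemma sum_sum_le_sum_allocationLoad {ι σ : Type*} [Fintype ι] [Fintype σ] [DecidableEq σ]
    {x : ι → Finset σ → ℝ} (hx : ∀ i R, 0 ≤ x i R) {I : Finset ι} {S : Finset σ}
    (hS : ∀ i ∈ I, ∀ R, x i R ≠ 0 → ∃ ν ∈ R, ν ∈ S) :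
    ∑ i ∈ I, ∑ R, x i R ≤ ∑ ν ∈ S, allocationLoad x ν :=
  calc ∑ i ∈ I, ∑ R, x i R
      ≤ ∑ i ∈ I, ∑ R, ∑ ν ∈ S, if ν ∈ R then x i R else 0 :=
        sum_le_sum fun i hi => sum_le_sum fun R _ =>
          le_sum_ite_mem_of_exists_mem (hx i R) (hS i hi R)
    _ = ∑ ν ∈ S, ∑ i ∈ I, ∑ R, if ν ∈ R then x i R else 0 := by
        simp_rw [sum_comm (s := (univ : Finset (Finset σ))) (t := S)]
        exact sum_comm
    _ ≤ ∑ ν ∈ S, allocationLoad x ν :=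
        sum_le_sum fun ν _ => sum_le_sum_of_subset_of_nonneg (subset_univ I) fun i _ _ =>
          sum_nonneg fun R _ => by split_ifs <;> simp [hx]

theorem stmt8_general {F : Type} [Field F] {k n : ℕ}
    (G : Matrix (Fin k) (Fin n) F)
    (lam : Fin k → ℝ) (hlam : lam ∈ SRRG G)
    (I : Finset (Fin k))
    -- `φ` is a nonzero linear functional whose kernel (a hyperplane) contains no `e_i`, `i ∈ I`
    (φ : (Fin k → F) →ₗ[F] F)
    (hI : ∀ i ∈ I, φ (Pi.single i 1) ≠ 0) :
    ∑ i ∈ I, lam i ≤ (Nat.card {ν : Fin n // φ (matCol G ν) ≠ 0} : ℝ) := by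
  classical
  obtain ⟨x, hx0, hxvan, hxsum, hcap⟩ := hlam
  set S := univ.filter fun ν => φ (matCol G ν) ≠ 0
  have hcard : Nat.card {ν : Fin n // φ (matCol G ν) ≠ 0} = #S := by
    rw [Nat.card_eq_fintype_card, Fintype.card_subtype]
  have hS : ∀ i ∈ I, ∀ R, x i R ≠ 0 → ∃ ν ∈ R, ν ∈ S := fun i hi R hR => by
    obtain ⟨ν, hνR, hν⟩ :=
      (not_imp_comm.mp (hxvan i R) hR).exists_mem_apply_ne_zero (hI i hi)
    exact ⟨ν, hνR, mem_filter.mpr ⟨mem_univ ν, hν⟩⟩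
  calc ∑ i ∈ I, lam i = ∑ i ∈ I, ∑ R, x i R := by simp_rw [hxsum]
    _ ≤ ∑ ν ∈ S, allocationLoad x ν := sum_sum_le_sum_allocationLoad hx0 hS
    _ ≤ ∑ ν ∈ S, (1 : ℝ) := sum_le_sum fun ν _ => hcap ν
    _ = Nat.card {ν : Fin n // φ (matCol G ν) ≠ 0} := by rw [hcard]; simp

theorem stmt8 {F : Type} [Field F] [Fintype F] {k n : ℕ} (hk : 2 ≤ k) (hkn : k < n)
    (G : Matrix (Fin k) (Fin n) F) (hrank : G.rank = k)
    (hcol : ∀ ν, matCol G ν ≠ 0)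
    (lam : Fin k → ℝ) (hlam : lam ∈ SRRG G)
    (I : Finset (Fin k))
    -- `φ` is a nonzero linear functional whose kernel (a hyperplane) contains no `e_i`, `i ∈ I`
    (φ : (Fin k → F) →ₗ[F] F) (hφ : φ ≠ 0)
    (hI : ∀ i ∈ I, φ (Pi.single i 1) ≠ 0) :
    ∑ i ∈ I, lam i ≤ (Nat.card {ν : Fin n // φ (matCol G ν) ≠ 0} : ℝ) :=
  stmt8_general G lam hlam I φ hI
end

section
/- Let d be the minimum Hamming distance of the linear code generated by the rows of G. Then ⌈δ(G)⌉ ≤ d, where δ(G) = min_{1≤i≤k} max{ x ∈ ℝ : x e_i ∈ Λ(G) } is the size of the largest simplex contained in the service rate region Λ(G). -/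
open Matrix

/-! Take a codeword `u G` of weight `d` and an object `i` with `u i ≠ 0`. The functional
`v ↦ u ⬝ᵥ v` kills every column outside the support `S` of `u G` but not `e_i`, so every recovery
set for `i` meets `S`. Each request for `i` is therefore served partly by `S`, whose `d` servers
have total capacity `d`; hence `λ_i* ≤ d`. -/

theorem IsRecoverySet.exists_vecMul_ne_zero {F : Type} [Field F] {k n : ℕ}
    {G : Matrix (Fin k) (Fin n) F} {i : Fin k} {R : Finset (Fin n)}
    (hR : IsRecoverySet G i R) {u : Fin k → F} (hui : u i ≠ 0) :
    ∃ ν ∈ R, (u ᵥ* G) ν ≠ 0 := by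
  by_contra! hvanish
  have hcols : matCol G '' (R : Set (Fin n)) ⊆ LinearMap.ker (dotProductBilin F F u) := by
    rintro _ ⟨ν, hν, rfl⟩
    exact hvanish ν hν
  have hei : u ⬝ᵥ Pi.single i 1 = 0 := Submodule.span_le.mpr hcols hR
  exact hui (by simpa [dotProduct_single] using hei)

theorem le_card_of_forall_isRecoverySet_inter_nonempty {F : Type} [Field F] {k n : ℕ}
    {G : Matrix (Fin k) (Fin n) F} {lam : Fin k → ℝ} (hlam : lam ∈ SRRG G) {i : Fin k}
    {S : Finset (Fin n)} (hS : ∀ R, IsRecoverySet G i R → ∃ ν ∈ R, ν ∈ S) :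
    lam i ≤ S.card := by
  obtain ⟨x, hx0, hxrec, hxsum, hxcap⟩ := hlam
  have hload_nonneg : ∀ j R ν, 0 ≤ if ν ∈ R then x j R else 0 := fun j R ν => by
    split_ifs
    exacts [hx0 j R, le_rfl]
  have hrate_le : ∀ R, x i R ≤ ∑ ν ∈ S, if ν ∈ R then x i R else 0 := by
    intro R
    by_cases hR : IsRecoverySet G i R
    · obtain ⟨ν, hνR, hνS⟩ := hS R hR
      calc x i R = if ν ∈ R then x i R else 0 := (if_pos hνR).symm
        _ ≤ _ := Finset.single_le_sum (fun μ _ => hload_nonneg i R μ) hνS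
    · exact (hxrec i R hR).le.trans (Finset.sum_nonneg fun ν _ => hload_nonneg i R ν)
  have hserver_le : ∀ ν, ∑ R, (if ν ∈ R then x i R else 0) ≤ 1 := fun ν =>
    (Finset.single_le_sum (f := fun j => ∑ R, if ν ∈ R then x j R else 0)
      (fun j _ => Finset.sum_nonneg fun R _ => hload_nonneg j R ν) (Finset.mem_univ i)).trans
      (hxcap ν)
  calc lam i = ∑ R, x i R := (hxsum i).symm
    _ ≤ ∑ R, ∑ ν ∈ S, if ν ∈ R then x i R else 0 := Finset.sum_le_sum fun R _ => hrate_le R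
    _ = ∑ ν ∈ S, ∑ R, if ν ∈ R then x i R else 0 := Finset.sum_comm
    _ ≤ ∑ _ν ∈ S, (1 : ℝ) := Finset.sum_le_sum fun ν _ => hserver_le ν
    _ = S.card := by simp

theorem stmt9 {F : Type} [Field F] [DecidableEq F] {k n : ℕ}
    (hk : 2 ≤ k)
    (G : Matrix (Fin k) (Fin n) F)
    -- `lamstar i = λ_i*(G)`, the largest `x` with `x e_i ∈ Λ(G)`; `δ(G) = min_i lamstar i`
    (lamstar : Fin k → ℝ)
    (hstar : ∀ i, IsGreatest {x : ℝ | Pi.single i x ∈ SRRG G} (lamstar i))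
    -- `d` is the minimum Hamming distance of the code generated by the rows of `G`
    (d : ℕ)
    (hd : IsLeast {w : ℕ | ∃ u : Fin k → F, u ᵥ* G ≠ 0 ∧ w = hammingNorm (u ᵥ* G)} d) :
    ⌈Finset.univ.inf' (Finset.univ_nonempty_iff.mpr ⟨⟨0, by omega⟩⟩) lamstar⌉ ≤ (d : ℤ) := by
  obtain ⟨⟨u, hu0, rfl⟩, -⟩ := hd
  obtain ⟨i, hui⟩ : ∃ i, u i ≠ 0 := by
    by_contra! hu
    exact hu0 (by rw [show u = 0 from funext hu, zero_vecMul])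
  have hlam_le : lamstar i ≤ hammingNorm (u ᵥ* G) := by
    have hmem : Pi.single i (lamstar i) ∈ SRRG G := (hstar i).1
    have hS := le_card_of_forall_isRecoverySet_inter_nonempty hmem
      (S := {ν | (u ᵥ* G) ν ≠ 0}) fun R hR => by simpa using hR.exists_vecMul_ne_zero hui
    rwa [Pi.single_eq_same] at hS
  rw [Int.ceil_le]
  exact_mod_cast (Finset.inf'_le lamstar (Finset.mem_univ i)).trans hlam_le
end

section
/- Suppose G is systematic (its first k columns form the k×k identity matrix) and G has availability t, i.e. for every i ∈ {1,...,k} there exist t+1 pairwise disjoint recovery sets for object i. Then (t+1)·e_i ∈ Λ(G) for every i ∈ {1,...,k}; consequently t+1 ≤ δ(G), and the minimum Hamming distance d of the code generated by the rows of G satisfies d ≥ t+1. -/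
open Matrix

/-!
Give each of the `t + 1` disjoint recovery sets of object `i` one unit of service: disjointness
means every server lies in at most one of them, so no server is loaded beyond capacity and
`(t + 1) e_i ∈ Λ(G)`. For the distance, if `u_i ≠ 0` then the codeword `u G` cannot vanish on a
recovery set `R` of `i`, since otherwise the functional `v ↦ u ⬝ᵥ v` would kill the span of the
columns in `R`, which contains `e_i`. Picking a nonzero coordinate in each of the `t + 1` disjoint
recovery sets gives `t + 1` distinct coordinates in the support of `u G`.
-/

open Finset Function

lemma card_filter_mem_le_one_of_pairwise_disjoint {ι α : Type*} [Fintype ι]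
    {Rs : ι → Finset α} (hdisj : Pairwise (Disjoint on Rs)) (ν : α) [DecidablePred (ν ∈ Rs ·)] :
    #{a | ν ∈ Rs a} ≤ 1 :=
  card_le_one.2 fun _ ha _ hb => by_contra fun hab =>
    disjoint_left.1 (hdisj hab) (mem_filter.1 ha).2 (mem_filter.1 hb).2

lemma sum_ite_mem_card_fiber {ι α : Type*} [Fintype ι] [Fintype α] [DecidableEq α]
    (Rs : ι → Finset α) (ν : α) :
    ∑ R : Finset α, (if ν ∈ R then (#{a | Rs a = R} : ℝ) else 0) = #{a | ν ∈ Rs a} := by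
  rw [← sum_filter, card_eq_sum_card_fiberwise (t := {R : Finset α | ν ∈ R})
    (fun a ha => by simpa using ha)]
  push_cast
  refine sum_congr rfl fun R hR => ?_
  rw [filter_filter]
  congr 2
  ext a
  simp only [mem_filter, mem_univ, true_and] at hR ⊢
  exact ⟨fun h => ⟨h ▸ hR, h⟩, fun h => h.2⟩

lemma card_le_hammingNorm_of_pairwise_disjoint {ι α M : Type*} [Fintype ι] [Fintype α] [Zero M]
    [DecidableEq M] {c : α → M} {Rs : ι → Finset α} (hdisj : Pairwise (Disjoint on Rs))
    (hsupp : ∀ a, ∃ ν ∈ Rs a, c ν ≠ 0) :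
    Fintype.card ι ≤ hammingNorm c := by
  choose f hf hfc using hsupp
  have hinj : Injective f := fun a b hab => by_contra fun hne =>
    disjoint_left.1 (hdisj hne) (hf a) (hab ▸ hf b)
  simpa [hammingNorm] using card_le_card_of_injOn f (s := univ) (t := {ν | c ν ≠ 0})
    (fun a _ => by simpa using hfc a) hinj.injOn

section RecoverySets

variable {F : Type} [Field F] {k n : ℕ} {G : Matrix (Fin k) (Fin n) F}

theorem single_card_mem_SRRG_of_pairwise_disjoint {ι : Type} [Fintype ι] {i : Fin k}
    {Rs : ι → Finset (Fin n)} (hrec : ∀ a, IsRecoverySet G i (Rs a))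
    (hdisj : Pairwise (Disjoint on Rs)) :
    Pi.single i (Fintype.card ι : ℝ) ∈ SRRG G := by
  classical
  refine ⟨fun i' R => if i' = i then (#{a | Rs a = R} : ℝ) else 0, ?_, ?_, ?_, ?_⟩
  · intro i' R
    dsimp only
    split_ifs <;> positivity
  · rintro i' R hR
    dsimp only
    split_ifs with h
    · subst h
      have hempty : ({a | Rs a = R} : Finset ι) = ∅ :=
        filter_eq_empty_iff.2 fun a _ ha => hR (ha ▸ hrec a)
      simp [hempty]
    · rfl
  · intro i'
    by_cases h : i' = i
    · subst h
      simp only [if_true, Pi.single_eq_same]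
      exact_mod_cast (card_eq_sum_card_fiberwise fun a _ => mem_univ (Rs a)).symm
    · simp [h]
  · intro ν
    rw [sum_eq_single i (fun i' _ h => by simp [h]) (by simp)]
    simp only [if_true, sum_ite_mem_card_fiber]
    exact_mod_cast card_filter_mem_le_one_of_pairwise_disjoint hdisj ν

theorem exists_mem_vecMul_ne_zero_of_isRecoverySet {i : Fin k} {R : Finset (Fin n)}
    (hrec : IsRecoverySet G i R) {u : Fin k → F} (hu : u i ≠ 0) :
    ∃ ν ∈ R, (u ᵥ* G) ν ≠ 0 := by
  by_contra! hR
  have hspan : Submodule.span F (matCol G '' (R : Set (Fin n))) ≤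
      LinearMap.ker (dotProductBilin F F u) := by
    rw [Submodule.span_le]
    rintro _ ⟨ν, hν, rfl⟩
    exact hR ν hν
  exact hu (by simpa using hspan hrec)

end RecoverySets

theorem stmt10_general {F : Type} [Field F] [DecidableEq F] {k n : ℕ}
    (G : Matrix (Fin k) (Fin n) F)
    -- `G` has availability `t`: each object has `t+1` pairwise disjoint recovery sets
    (t : ℕ)
    (havail : ∀ i : Fin k, ∃ Rs : Fin (t + 1) → Finset (Fin n),
      (∀ a, IsRecoverySet G i (Rs a)) ∧ ∀ a b, a ≠ b → Disjoint (Rs a) (Rs b))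
    -- `lamstar i = λ_i*(G)`; `δ(G) = min_i lamstar i`
    (lamstar : Fin k → ℝ)
    (hstar : ∀ i, IsGreatest {x : ℝ | Pi.single i x ∈ SRRG G} (lamstar i))
    -- `d` is the minimum Hamming distance of the code generated by the rows of `G`
    (d : ℕ)
    (hd : IsLeast {w : ℕ | ∃ u : Fin k → F, u ᵥ* G ≠ 0 ∧ w = hammingNorm (u ᵥ* G)} d) :
    (∀ i, Pi.single i ((t : ℝ) + 1) ∈ SRRG G) ∧
    (∀ i, (t : ℝ) + 1 ≤ lamstar i) ∧
    t + 1 ≤ d := by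
  have hmem : ∀ i, Pi.single i ((t : ℝ) + 1) ∈ SRRG G := fun i => by
    obtain ⟨Rs, hrec, hdisj⟩ := havail i
    simpa using single_card_mem_SRRG_of_pairwise_disjoint hrec hdisj
  refine ⟨hmem, fun i => (hstar i).2 (hmem i), ?_⟩
  obtain ⟨u, hu, rfl⟩ := hd.1
  obtain ⟨i, hi⟩ : ∃ i, u i ≠ 0 :=
    Function.ne_iff.1 fun h0 => hu (by rw [show u = 0 from h0, zero_vecMul])
  obtain ⟨Rs, hrec, hdisj⟩ := havail i
  simpa using card_le_hammingNorm_of_pairwise_disjoint hdisj fun a =>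
    exists_mem_vecMul_ne_zero_of_isRecoverySet (hrec a) hi

theorem stmt10 {F : Type} [Field F] [Fintype F] [DecidableEq F] {k n : ℕ}
    (hk : 2 ≤ k) (hkn : k < n)
    (G : Matrix (Fin k) (Fin n) F) (hrank : G.rank = k)
    (hcol : ∀ ν, matCol G ν ≠ 0)
    -- `G` is systematic: its first `k` columns form the identity matrix
    (hsys : ∀ j : Fin k, matCol G (Fin.castLE hkn.le j) = Pi.single j 1)
    -- `G` has availability `t`: each object has `t+1` pairwise disjoint recovery sets
    (t : ℕ)
    (havail : ∀ i : Fin k, ∃ Rs : Fin (t + 1) → Finset (Fin n),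
      (∀ a, IsRecoverySet G i (Rs a)) ∧ ∀ a b, a ≠ b → Disjoint (Rs a) (Rs b))
    -- `lamstar i = λ_i*(G)`; `δ(G) = min_i lamstar i`
    (lamstar : Fin k → ℝ)
    (hstar : ∀ i, IsGreatest {x : ℝ | Pi.single i x ∈ SRRG G} (lamstar i))
    -- `d` is the minimum Hamming distance of the code generated by the rows of `G`
    (d : ℕ)
    (hd : IsLeast {w : ℕ | ∃ u : Fin k → F, u ᵥ* G ≠ 0 ∧ w = hammingNorm (u ᵥ* G)} d) :
    (∀ i, Pi.single i ((t : ℝ) + 1) ∈ SRRG G) ∧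
    (∀ i, (t : ℝ) + 1 ≤ lamstar i) ∧
    t + 1 ≤ d :=
  stmt10_general G t havail lamstar hstar d hd
end

section
/- (Dual Distance Bound) Suppose G is systematic and let d⊥ be the minimum Hamming distance of the dual of the code generated by the rows of G. Then every (λ_1,...,λ_k) ∈ Λ(G) satisfies ∑_{i=1}^k ( min{λ_i, 1} + (d⊥ − 1)·max{0, λ_i − 1} ) ≤ n. -/
/-!
Let `c i` be the systematic column of object `i` and `s i` the rate of object `i` served by
recovery sets through `c i`, so `s i ≤ min (λ i) 1`. If a recovery set `R` for `i` avoids `c i`,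
subtracting `e_{c i}` from a combination of the columns in `R` that produces `e_i` gives a nonzero
dual codeword supported on `R ∪ {c i}`, hence `|R| ≥ d⊥ - 1`. Every recovery set is nonempty, and
`d⊥ ≥ 2` because no column vanishes. Counting the total load `∑ λ_{i,R} |R| ≤ n` of the servers
therefore gives `∑ (s i + (d⊥ - 1) (λ i - s i)) ≤ n`, whose left side decreases in each `s i`.
-/

open Matrix

open Finset

section DualCode

variable {F : Type} [Field F] {k n : ℕ} (G : Matrix (Fin k) (Fin n) F)

theorem sum_mul_vecMul_eq_zero_iff (y : Fin n → F) :
    (∀ u : Fin k → F, ∑ ν, y ν * (u ᵥ* G) ν = 0) ↔ G *ᵥ y = 0 := by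
  have hdot : ∀ u, ∑ ν, y ν * (u ᵥ* G) ν = u ⬝ᵥ (G *ᵥ y) := fun u => by
    rw [dotProduct_mulVec, dotProduct_comm]; rfl
  simp_rw [hdot]
  refine ⟨fun h => funext fun r => ?_, fun h u => by rw [h, dotProduct_zero]⟩
  simpa using h (Pi.single r 1)

variable [DecidableEq F]

theorem two_le_hammingNorm_of_mulVec_eq_zero (hcol : ∀ ν, matCol G ν ≠ 0) {y : Fin n → F}
    (hy : y ≠ 0) (hGy : G *ᵥ y = 0) : 2 ≤ hammingNorm y := by
  by_contra! hlt
  obtain ⟨ν, hν⟩ : ∃ ν, y ν ≠ 0 := by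
    by_contra! h
    exact hy (funext h)
  have hsingle : y = Pi.single ν (y ν) := by
    funext μ
    rcases eq_or_ne μ ν with rfl | hμ
    · simp
    rw [Pi.single_eq_of_ne hμ]
    by_contra hyμ
    have hsub : ({ν, μ} : Finset (Fin n)) ⊆ ({x | y x ≠ 0} : Finset (Fin n)) := by
      simp [insert_subset_iff, hν, hyμ]
    have := card_le_card hsub
    rw [card_pair hμ.symm] at this
    exact absurd hlt (not_lt.2 this)
  rw [hsingle, mulVec_single, smul_eq_zero] at hGy
  exact hcol ν (hGy.resolve_left (by simpa using hν))

end DualCode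

namespace IsRecoverySet

variable {F : Type} [Field F] {k n : ℕ} {G : Matrix (Fin k) (Fin n) F} {i : Fin k}
  {R : Finset (Fin n)}

theorem nonempty (hR : IsRecoverySet G i R) : R.Nonempty := by
  rw [nonempty_iff_ne_empty]
  rintro rfl
  simp [IsRecoverySet] at hR

theorem exists_mulVec_eq_single (hR : IsRecoverySet G i R) :
    ∃ l : Fin n → F, (∀ ν ∉ R, l ν = 0) ∧ G *ᵥ l = Pi.single i 1 := by
  classical
  obtain ⟨c, hc⟩ := (Submodule.mem_span_image_finset_iff_exists_fun' F).1 hR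
  refine ⟨fun ν => if ν ∈ R then c ν else 0, fun ν hν => if_neg hν, ?_⟩
  rw [← hc]
  ext r
  simp [mulVec, dotProduct, Finset.sum_apply, matCol, mul_comm]

theorem exists_mulVec_eq_zero_hammingNorm_le [DecidableEq F] (hR : IsRecoverySet G i R)
    {c : Fin n} (hc : matCol G c = Pi.single i 1) (hcR : c ∉ R) :
    ∃ y : Fin n → F, y ≠ 0 ∧ G *ᵥ y = 0 ∧ hammingNorm y ≤ #R + 1 := by
  obtain ⟨l, hlR, hGl⟩ := hR.exists_mulVec_eq_single
  refine ⟨l - Pi.single c 1, fun h => ?_, ?_, ?_⟩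
  · simpa [hlR c hcR] using congrFun h c
  · rw [mulVec_sub, hGl, mulVec_single_one, ← hc]
    exact sub_self _
  · have hsupp : ({ν | l ν - (Pi.single c 1 : Fin n → F) ν ≠ 0} : Finset (Fin n)) ⊆ insert c R := by
      intro ν hν
      by_contra h
      rw [mem_insert, not_or] at h
      simp [hlR ν h.2, h.1] at hν
    exact (card_le_card hsupp).trans (card_insert_le c R)

end IsRecoverySet

theorem min_add_mul_max_sub_one_le {K : Type*} [Field K] [LinearOrder K] [IsStrictOrderedRing K]
    {l s a : K} (ha : 1 ≤ a) (hs1 : s ≤ 1) (hsl : s ≤ l) :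
    min l 1 + a * max 0 (l - 1) ≤ s + a * (l - s) := by
  rcases le_total l 1 with h | h
  · rw [min_eq_left h, max_eq_left (by linarith)]
    nlinarith
  · rw [min_eq_right h, max_eq_right (by linarith)]
    nlinarith

section Allocation

variable {α : Type*} [Fintype α] [DecidableEq α]

theorem sum_sum_ite_mem_eq_sum_mul_card {M : Type*} [NonAssocSemiring M] (f : Finset α → M) :
    ∑ ν, ∑ R, (if ν ∈ R then f R else 0) = ∑ R, f R * #R := by
  rw [sum_comm]
  refine sum_congr rfl fun R _ => ?_
  rw [sum_ite_mem, univ_inter, sum_const, nsmul_eq_mul']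

theorem sum_ite_mem_add_mul_le_sum_mul_card (x : Finset α → ℝ) (c : α) {a : ℝ}
    (hx : ∀ R, 0 ≤ x R) (hne : ∀ R, x R ≠ 0 → R.Nonempty)
    (hcard_of_notMem : ∀ R, x R ≠ 0 → c ∉ R → a ≤ #R) :
    ∑ R, (if c ∈ R then x R else 0) + a * (∑ R, x R - ∑ R, if c ∈ R then x R else 0) ≤
      ∑ R, x R * #R := by
  rw [← sum_sub_distrib, mul_sum, ← sum_add_distrib]
  refine sum_le_sum fun R _ => ?_
  rcases eq_or_ne (x R) 0 with h0 | h0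
  · simp [h0]
  have := hx R
  by_cases hc : c ∈ R
  · have : (1 : ℝ) ≤ #R := by exact_mod_cast (hne R h0).card_pos
    simp only [if_pos hc, sub_self, mul_zero, add_zero]
    nlinarith
  · have := hcard_of_notMem R h0 hc
    simp only [if_neg hc, sub_zero, zero_add]
    nlinarith

theorem min_add_mul_max_le_sum_mul_card (x : Finset α → ℝ) (c : α) {a : ℝ}
    (hx : ∀ R, 0 ≤ x R) (hne : ∀ R, x R ≠ 0 → R.Nonempty)
    (hcard_of_notMem : ∀ R, x R ≠ 0 → c ∉ R → a ≤ #R) (ha : 1 ≤ a)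
    (hload : ∑ R, (if c ∈ R then x R else 0) ≤ 1) :
    min (∑ R, x R) 1 + a * max 0 (∑ R, x R - 1) ≤ ∑ R, x R * #R := by
  refine (min_add_mul_max_sub_one_le ha hload (sum_le_sum fun R _ => ?_)).trans
    (sum_ite_mem_add_mul_le_sum_mul_card x c hx hne hcard_of_notMem)
  split_ifs
  exacts [le_rfl, hx R]

end Allocation

theorem stmt12_general {F : Type} [Field F] [DecidableEq F] {k n : ℕ}
    (hkn : k < n)
    (G : Matrix (Fin k) (Fin n) F)
    (hcol : ∀ ν, matCol G ν ≠ 0)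
    -- `G` is systematic: its first `k` columns form the identity matrix
    (hsys : ∀ j : Fin k, matCol G (Fin.castLE hkn.le j) = Pi.single j 1)
    -- `dperp` is the minimum Hamming distance of the dual of the code generated by `G`
    (dperp : ℕ)
    (hdperp : IsLeast {w : ℕ | ∃ x : Fin n → F, x ≠ 0 ∧
      (∀ u : Fin k → F, ∑ ν, x ν * (u ᵥ* G) ν = 0) ∧ w = hammingNorm x} dperp) :
    ∀ lam ∈ SRRG G,
      ∑ i, (min (lam i) 1 + ((dperp : ℝ) - 1) * max 0 (lam i - 1)) ≤ (n : ℝ) := by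
  rintro lam ⟨x, hx, hrec, hlam, hcap⟩
  obtain rfl := funext hlam
  set c : Fin k → Fin n := Fin.castLE hkn.le
  have hd : (2 : ℝ) ≤ dperp := by
    obtain ⟨y, hy, hGy, rfl⟩ := hdperp.1
    exact_mod_cast two_le_hammingNorm_of_mulVec_eq_zero G hcol hy
      ((sum_mul_vecMul_eq_zero_iff G y).1 hGy)
  have hobject : ∀ i, min (∑ R, x i R) 1 + ((dperp : ℝ) - 1) * max 0 (∑ R, x i R - 1) ≤
      ∑ R, x i R * #R := by
    intro i
    have hR : ∀ R, x i R ≠ 0 → IsRecoverySet G i R := fun R => not_imp_comm.1 (hrec i R)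
    refine min_add_mul_max_le_sum_mul_card (x i) (c i) (hx i) (fun R h => (hR R h).nonempty)
      (fun R h hcR => ?_) (by linarith) ?_
    · obtain ⟨y, hy, hGy, hw⟩ := (hR R h).exists_mulVec_eq_zero_hammingNorm_le (hsys i) hcR
      have : dperp ≤ #R + 1 :=
        (hdperp.2 ⟨y, hy, (sum_mul_vecMul_eq_zero_iff G y).2 hGy, rfl⟩).trans hw
      have : (dperp : ℝ) ≤ #R + 1 := by exact_mod_cast this
      linarith
    · refine le_trans ?_ (hcap (c i))
      exact single_le_sum (f := fun j => ∑ R, if c i ∈ R then x j R else 0)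
        (fun j _ => sum_nonneg fun R _ => by split_ifs; exacts [hx j R, le_rfl]) (mem_univ i)
  calc _ ≤ ∑ i, ∑ R, x i R * #R := sum_le_sum fun i _ => hobject i
    _ = ∑ ν, ∑ i, ∑ R, if ν ∈ R then x i R else 0 :=
      (sum_congr rfl fun i _ => (sum_sum_ite_mem_eq_sum_mul_card (x i)).symm).trans sum_comm
    _ ≤ ∑ _ν : Fin n, 1 := sum_le_sum fun ν _ => hcap ν
    _ = n := by simp

theorem stmt12 {F : Type} [Field F] [Fintype F] [DecidableEq F] {k n : ℕ}
    (hk : 2 ≤ k) (hkn : k < n)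
    (G : Matrix (Fin k) (Fin n) F) (hrank : G.rank = k)
    (hcol : ∀ ν, matCol G ν ≠ 0)
    -- `G` is systematic: its first `k` columns form the identity matrix
    (hsys : ∀ j : Fin k, matCol G (Fin.castLE hkn.le j) = Pi.single j 1)
    -- `dperp` is the minimum Hamming distance of the dual of the code generated by `G`
    (dperp : ℕ)
    (hdperp : IsLeast {w : ℕ | ∃ x : Fin n → F, x ≠ 0 ∧
      (∀ u : Fin k → F, ∑ ν, x ν * (u ᵥ* G) ν = 0) ∧ w = hammingNorm x} dperp) :
    ∀ lam ∈ SRRG G,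
      ∑ i, (min (lam i) 1 + ((dperp : ℝ) - 1) * max 0 (lam i - 1)) ≤ (n : ℝ) :=
  stmt12_general hkn G hcol hsys dperp hdperp
end

section
/- Suppose G is systematic and for i ∈ {1,...,k} let s_i be the number of systematic nodes for object i, i.e. the number of columns of G equal to a nonzero scalar multiple of e_i. Then every (λ_1,...,λ_k) ∈ Λ(G) satisfies ∑_{i=1}^k ( min{λ_i, s_i} + 2·max{0, λ_i − s_i} ) ≤ n. -/
open Matrix

/-
A recovery set for object `i` is nonempty, and a singleton recovery set `{ν}` forces `ν` to be
systematic for `i`; hence `|R| + |R ∩ S_i| ≥ 2` for every recovery set `R`. Double counting against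
the node capacities gives `∑_R |R ∩ S_i| x_{i,R} ≤ s_i`, and together with the previous inequality
`λ_i + max(0, λ_i - s_i) ≤ ∑_R |R| x_{i,R}`. Summed over `i`, the right-hand side is the total load
of the `n` nodes, at most `n`; and `min(λ, s) + 2 max(0, λ - s) = λ + max(0, λ - s)`.
-/

section Load

variable {α : Type*} [Fintype α] [DecidableEq α]

def nodeLoad (x : Finset α → ℝ) (ν : α) : ℝ :=
  ∑ R, if ν ∈ R then x R else 0

lemma sum_card_inter_mul_eq_sum_nodeLoad (x : Finset α → ℝ) (T : Finset α) :
    ∑ R, ((R ∩ T).card : ℝ) * x R = ∑ ν ∈ T, nodeLoad x ν := by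
  simp only [nodeLoad]
  rw [Finset.sum_comm]
  refine Finset.sum_congr rfl fun R _ => ?_
  rw [Finset.sum_ite_mem, Finset.inter_comm, Finset.sum_const, nsmul_eq_mul]

lemma sum_card_inter_mul_le_card {x : Finset α → ℝ} (hload : ∀ ν, nodeLoad x ν ≤ 1)
    (T : Finset α) : ∑ R, ((R ∩ T).card : ℝ) * x R ≤ T.card := by
  rw [sum_card_inter_mul_eq_sum_nodeLoad]
  simpa using Finset.sum_le_sum fun ν (_ : ν ∈ T) => hload ν

lemma add_max_sub_card_le_sum_card_mul {x : Finset α → ℝ} (hx : ∀ R, 0 ≤ x R)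
    (hload : ∀ ν, nodeLoad x ν ≤ 1) {S : Finset α}
    (hcard : ∀ R, x R ≠ 0 → 2 ≤ R.card + (R ∩ S).card) :
    (∑ R, x R) + max 0 ((∑ R, x R) - S.card) ≤ ∑ R, (R.card : ℝ) * x R := by
  have hS := sum_card_inter_mul_le_card hload S
  have hpoint : ∀ R, x R ≤ R.card * x R ∧ 2 * x R ≤ (R.card + (R ∩ S).card) * x R := by
    intro R
    rcases eq_or_ne (x R) 0 with h | h
    · simp [h]
    have h2 : (2 : ℝ) ≤ R.card + (R ∩ S).card := by exact_mod_cast hcard R h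
    have hinter : ((R ∩ S).card : ℝ) ≤ R.card := by
      exact_mod_cast Finset.card_le_card Finset.inter_subset_left
    constructor <;> nlinarith [hx R]
  have h1 := Finset.sum_le_sum fun R (_ : R ∈ Finset.univ) => (hpoint R).1
  have h2 := Finset.sum_le_sum fun R (_ : R ∈ Finset.univ) => (hpoint R).2
  simp only [add_mul, Finset.sum_add_distrib, ← Finset.mul_sum] at h2
  rcases le_total 0 ((∑ R, x R) - S.card) with h | h
  · rw [max_eq_right h]; linarith
  · rw [max_eq_left h]; linarith

lemma min_add_two_mul_max_sub (a b : ℝ) :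
    min a b + 2 * max 0 (a - b) = a + max 0 (a - b) := by
  rcases le_total a b with h | h
  · rw [min_eq_left h, max_eq_left (by linarith)]; ring
  · rw [min_eq_right h, max_eq_right (by linarith)]; ring

end Load

section Recovery

variable {F : Type} [Field F] {k n : ℕ} (G : Matrix (Fin k) (Fin n) F)

open Classical in
noncomputable def systematicNodes (i : Fin k) : Finset (Fin n) :=
  {ν | ∃ c : F, c ≠ 0 ∧ matCol G ν = c • (Pi.single i 1 : Fin k → F)}

lemma natCard_systematic_eq_card_systematicNodes (i : Fin k) :
    Nat.card {ν : Fin n // ∃ c : F, c ≠ 0 ∧ matCol G ν = c • (Pi.single i 1 : Fin k → F)} =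
      (systematicNodes G i).card := by
  classical
  rw [Nat.card_eq_fintype_card, Fintype.card_subtype, systematicNodes]

variable {G}

lemma IsRecoverySet.nonempty_s13 {i : Fin k} {R : Finset (Fin n)} (h : IsRecoverySet G i R) :
    R.Nonempty := by
  rw [Finset.nonempty_iff_ne_empty]
  rintro rfl
  simp only [IsRecoverySet, Finset.coe_empty, Set.image_empty, Submodule.span_empty,
    Submodule.mem_bot] at h
  simpa using congrFun h i

lemma IsRecoverySet.mem_systematicNodes_of_singleton {i : Fin k} {ν : Fin n}
    (h : IsRecoverySet G i {ν}) : ν ∈ systematicNodes G i := by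
  simp only [IsRecoverySet, Finset.coe_singleton, Set.image_singleton,
    Submodule.mem_span_singleton] at h
  obtain ⟨c, hc⟩ := h
  have hc0 : c ≠ 0 := by
    rintro rfl
    simpa using congrFun hc.symm i
  simp only [systematicNodes, Finset.mem_filter, Finset.mem_univ, true_and]
  exact ⟨c⁻¹, inv_ne_zero hc0, by rw [← hc, smul_smul, inv_mul_cancel₀ hc0, one_smul]⟩

lemma IsRecoverySet.two_le_card_add_card_inter_systematicNodes {i : Fin k}
    {R : Finset (Fin n)} (h : IsRecoverySet G i R) :
    2 ≤ R.card + (R ∩ systematicNodes G i).card := by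
  have hpos := h.nonempty_s13.card_pos
  rcases Nat.lt_or_ge 1 R.card with h2 | h1
  · omega
  obtain ⟨ν, rfl⟩ := Finset.card_eq_one.1 (show R.card = 1 by omega)
  simp [h.mem_systematicNodes_of_singleton]

end Recovery

theorem stmt13_general {F : Type} [Field F] {k n : ℕ}
    (G : Matrix (Fin k) (Fin n) F)
    -- `s i` is the number of systematic nodes for object `i`
    (s : Fin k → ℕ)
    (hs : ∀ i, s i = Nat.card {ν : Fin n // ∃ c : F, c ≠ 0 ∧
      matCol G ν = c • (Pi.single i 1 : Fin k → F)}) :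
    ∀ lam ∈ SRRG G,
      ∑ i, (min (lam i) (s i : ℝ) + 2 * max 0 (lam i - (s i : ℝ))) ≤ (n : ℝ) := by
  rintro lam ⟨x, hx0, hxrec, hxsum, hxcap⟩
  have hload : ∀ i ν, nodeLoad (x i) ν ≤ 1 := fun i ν =>
    (Finset.single_le_sum (fun j _ => Finset.sum_nonneg fun R _ => by
      split_ifs <;> simp [hx0]) (Finset.mem_univ i)).trans (hxcap ν)
  have hobject : ∀ i, min (lam i) (s i : ℝ) + 2 * max 0 (lam i - (s i : ℝ)) ≤
      ∑ R, (R.card : ℝ) * x i R := by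
    intro i
    rw [min_add_two_mul_max_sub, hs i, natCard_systematic_eq_card_systematicNodes, ← hxsum i]
    refine add_max_sub_card_le_sum_card_mul (hx0 i) (hload i) fun R hR => ?_
    exact (not_imp_comm.1 (hxrec i R) hR).two_le_card_add_card_inter_systematicNodes
  calc ∑ i, (min (lam i) (s i : ℝ) + 2 * max 0 (lam i - (s i : ℝ)))
      ≤ ∑ i, ∑ R, (R.card : ℝ) * x i R := Finset.sum_le_sum fun i _ => hobject i
    _ = ∑ i, ∑ ν, nodeLoad (x i) ν := Finset.sum_congr rfl fun i _ => by
      simpa using sum_card_inter_mul_eq_sum_nodeLoad (x i) Finset.univ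
    _ = ∑ ν, ∑ i, nodeLoad (x i) ν := Finset.sum_comm
    _ ≤ ∑ _ν : Fin n, (1 : ℝ) := Finset.sum_le_sum fun ν _ => hxcap ν
    _ = n := by simp

theorem stmt13 {F : Type} [Field F] [Fintype F] {k n : ℕ}
    (hk : 2 ≤ k) (hkn : k < n)
    (G : Matrix (Fin k) (Fin n) F) (hrank : G.rank = k)
    (hcol : ∀ ν, matCol G ν ≠ 0)
    -- `G` is systematic: its first `k` columns form the identity matrix
    (hsys : ∀ j : Fin k, matCol G (Fin.castLE hkn.le j) = Pi.single j 1)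
    -- `s i` is the number of systematic nodes for object `i`
    (s : Fin k → ℕ)
    (hs : ∀ i, s i = Nat.card {ν : Fin n // ∃ c : F, c ≠ 0 ∧
      matCol G ν = c • (Pi.single i 1 : Fin k → F)}) :
    ∀ lam ∈ SRRG G,
      ∑ i, (min (lam i) (s i : ℝ) + 2 * max 0 (lam i - (s i : ℝ))) ≤ (n : ℝ) :=
  stmt13_general G s hs
end

section
/- Let G ∈ F_q^{k×n} be a systematic MDS matrix (its first k columns form the identity and every k columns of G are linearly independent over F_q). Then the max-sum capacity satisfies λ(G) ≤ k + (n − k)/k, where λ(G) = max{ λ_1 + ... + λ_k : (λ_1,...,λ_k) ∈ Λ(G) }. -/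
/-!
A recovery set for object `i` either contains the systematic node of `i`, or else, by the MDS
property, it has at least `k` elements. Since each systematic node serves at most one unit of
demand, the demand `A` served through the first kind of sets is at most `k`; counting the total
load on all `n` nodes gives `A + k B ≤ n` for the remaining demand `B`, so
`A + B ≤ (1 - 1/k) A + n/k ≤ k + (n - k)/k`.
-/

open Matrix

open Finset

lemma le_card_of_mem_span_image {F V ι : Type*} [Field F] [AddCommGroup V] [Module F V]
    [Fintype ι] {v : ι → V} {k : ℕ} (hk : k ≤ Fintype.card ι)
    (hli : ∀ S : Finset ι, S.card = k → LinearIndepOn F v (S : Set ι))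
    {R : Finset ι} {c : ι} (hc : c ∉ R) (hmem : v c ∈ Submodule.span F (v '' R)) :
    k ≤ R.card := by
  classical
  by_contra! hR
  have hcard : (insert c R).card ≤ k := by rw [card_insert_of_notMem hc]; omega
  obtain ⟨S, hcS, -, hS⟩ := exists_subsuperset_card_eq (subset_univ _) hcard hk
  have hind : LinearIndepOn F v (insert c (R : Set ι)) :=
    (hli S hS).mono (by exact_mod_cast hcS)
  exact ((linearIndepOn_insert (mod_cast hc)).1 hind).2 hmem

lemma IsRecoverySet.le_card {F : Type} [Field F] {k n : ℕ} (hkn : k < n)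
    {G : Matrix (Fin k) (Fin n) F}
    (hsys : ∀ j : Fin k, matCol G (Fin.castLE hkn.le j) = Pi.single j 1)
    (hmds : ∀ S : Finset (Fin n), S.card = k →
      LinearIndependent F (fun ν : {x : Fin n // x ∈ S} => matCol G ν.1))
    {i : Fin k} {R : Finset (Fin n)} (hrec : IsRecoverySet G i R)
    (hi : Fin.castLE hkn.le i ∉ R) : k ≤ R.card :=
  le_card_of_mem_span_image (by simpa using hkn.le) hmds hi (by rw [hsys]; exact hrec)

section Allocation

variable {ι N : Type*} [Fintype ι] [Fintype N] [DecidableEq N] (x : ι → Finset N → ℝ)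

lemma sum_sum_card_mul_le_card
    (hcap : ∀ ν : N, ∑ i, ∑ R : Finset N, (if ν ∈ R then x i R else 0) ≤ 1) :
    ∑ i, ∑ R : Finset N, (R.card : ℝ) * x i R ≤ Fintype.card N := by
  calc ∑ i, ∑ R : Finset N, (R.card : ℝ) * x i R
      = ∑ i, ∑ R : Finset N, ∑ ν : N, (if ν ∈ R then x i R else 0) := by
        simp only [sum_ite_mem, univ_inter, sum_const, nsmul_eq_mul]
    _ = ∑ ν : N, ∑ i, ∑ R : Finset N, (if ν ∈ R then x i R else 0) :=
        sum_comm_cycle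
    _ ≤ ∑ _ν : N, (1 : ℝ) := sum_le_sum fun ν _ => hcap ν
    _ = Fintype.card N := by simp

lemma sum_filter_mem_le_one (hx0 : ∀ i R, 0 ≤ x i R)
    (hcap : ∀ ν : N, ∑ i, ∑ R : Finset N, (if ν ∈ R then x i R else 0) ≤ 1) (i : ι) (ν : N) :
    ∑ R with ν ∈ R, x i R ≤ 1 := by
  calc ∑ R with ν ∈ R, x i R = ∑ R : Finset N, (if ν ∈ R then x i R else 0) := sum_filter _ _
    _ ≤ ∑ j, ∑ R : Finset N, (if ν ∈ R then x j R else 0) :=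
        single_le_sum (f := fun j => ∑ R : Finset N, (if ν ∈ R then x j R else 0))
          (fun j _ => sum_nonneg fun R _ => ite_nonneg (hx0 j R) le_rfl) (mem_univ i)
    _ ≤ 1 := hcap ν

end Allocation

lemma sum_filter_add_mul_sum_filter_le_sum_card_mul {N : Type*} [Fintype N] [DecidableEq N]
    {f : Finset N → ℝ} (hf : ∀ R, 0 ≤ f R) {k : ℕ} {c : N}
    (hbig : ∀ R, c ∉ R → f R ≠ 0 → k ≤ R.card) :
    ∑ R with c ∈ R, f R + k * ∑ R with c ∉ R, f R ≤ ∑ R, (R.card : ℝ) * f R := by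
  rw [← sum_filter_add_sum_filter_not univ (c ∈ ·), mul_sum]
  refine add_le_add (sum_le_sum fun R hR => ?_) (sum_le_sum fun R hR => ?_)
  · have hpos : 0 < R.card := card_pos.2 ⟨c, (mem_filter.1 hR).2⟩
    exact le_mul_of_one_le_left (hf R) (by exact_mod_cast hpos)
  · rcases eq_or_ne (f R) 0 with h | h
    · simp [h]
    · exact mul_le_mul_of_nonneg_right (by exact_mod_cast hbig R (mem_filter.1 hR).2 h) (hf R)

lemma add_le_of_le_of_add_mul_le {A B k n : ℝ} (hk : 1 ≤ k) (hA : A ≤ k)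
    (hAB : A + k * B ≤ n) : A + B ≤ k + (n - k) / k := by
  have hk0 : 0 < k := by linarith
  have key : k * (A + B) ≤ k * (k + (n - k) / k) := by
    rw [mul_add k k, mul_div_cancel₀ _ hk0.ne']
    nlinarith
  exact le_of_mul_le_mul_left key hk0

theorem sum_le_of_mem_SRRG {F : Type} [Field F] {k n : ℕ} (hk : 1 ≤ k) (hkn : k < n)
    {G : Matrix (Fin k) (Fin n) F}
    (hsys : ∀ j : Fin k, matCol G (Fin.castLE hkn.le j) = Pi.single j 1)
    (hmds : ∀ S : Finset (Fin n), S.card = k →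
      LinearIndependent F (fun ν : {x : Fin n // x ∈ S} => matCol G ν.1))
    {lam : Fin k → ℝ} (hlam : lam ∈ SRRG G) :
    ∑ i, lam i ≤ (k : ℝ) + ((n : ℝ) - (k : ℝ)) / (k : ℝ) := by
  obtain ⟨x, hx0, hxrec, hxsum, hxcap⟩ := hlam
  let c : Fin k → Fin n := Fin.castLE hkn.le
  have hsplit : ∑ i, lam i = ∑ i, ∑ R with c i ∈ R, x i R + ∑ i, ∑ R with c i ∉ R, x i R := by
    simp only [← hxsum, ← sum_add_distrib, sum_filter_add_sum_filter_not]
  have hA : ∑ i, ∑ R with c i ∈ R, x i R ≤ k := by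
    calc ∑ i, ∑ R with c i ∈ R, x i R ≤ ∑ _i : Fin k, (1 : ℝ) :=
          sum_le_sum fun i _ => sum_filter_mem_le_one x hx0 hxcap i (c i)
      _ = k := by simp
  have hload : ∑ i, ∑ R with c i ∈ R, x i R + k * ∑ i, ∑ R with c i ∉ R, x i R ≤ n := by
    rw [mul_sum, ← sum_add_distrib]
    refine (sum_le_sum fun i _ => ?_).trans (by simpa using sum_sum_card_mul_le_card x hxcap)
    refine sum_filter_add_mul_sum_filter_le_sum_card_mul (hx0 i) fun R hR hxR => ?_
    have hrec : IsRecoverySet G i R := by_contra fun h => hxR (hxrec i R h)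
    exact hrec.le_card hkn hsys hmds hR
  rw [hsplit]
  exact add_le_of_le_of_add_mul_le (by exact_mod_cast hk) hA hload

theorem stmt15_general {F : Type} [Field F] {k n : ℕ}
    (hk : 2 ≤ k) (hkn : k < n)
    (G : Matrix (Fin k) (Fin n) F)
    -- `G` is systematic: its first `k` columns form the identity matrix
    (hsys : ∀ j : Fin k, matCol G (Fin.castLE hkn.le j) = Pi.single j 1)
    -- `G` is MDS: every `k` columns are linearly independent
    (hmds : ∀ S : Finset (Fin n), S.card = k →
      LinearIndependent F (fun ν : {x : Fin n // x ∈ S} => matCol G ν.1))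
    -- `lmax = λ(G)`, the max-sum capacity
    (lmax : ℝ) (hlmax : IsGreatest {y : ℝ | ∃ lam ∈ SRRG G, y = ∑ i, lam i} lmax) :
    lmax ≤ (k : ℝ) + ((n : ℝ) - (k : ℝ)) / (k : ℝ) := by
  obtain ⟨lam, hlam, rfl⟩ := hlmax.1
  exact sum_le_of_mem_SRRG (by omega) hkn hsys hmds hlam

theorem stmt15 {F : Type} [Field F] [Fintype F] {k n : ℕ}
    (hk : 2 ≤ k) (hkn : k < n)
    (G : Matrix (Fin k) (Fin n) F) (hrank : G.rank = k)
    (hcol : ∀ ν, matCol G ν ≠ 0)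
    -- `G` is systematic: its first `k` columns form the identity matrix
    (hsys : ∀ j : Fin k, matCol G (Fin.castLE hkn.le j) = Pi.single j 1)
    -- `G` is MDS: every `k` columns are linearly independent
    (hmds : ∀ S : Finset (Fin n), S.card = k →
      LinearIndependent F (fun ν : {x : Fin n // x ∈ S} => matCol G ν.1))
    -- `lmax = λ(G)`, the max-sum capacity
    (lmax : ℝ) (hlmax : IsGreatest {y : ℝ | ∃ lam ∈ SRRG G, y = ∑ i, lam i} lmax) :
    lmax ≤ (k : ℝ) + ((n : ℝ) - (k : ℝ)) / (k : ℝ) :=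
  stmt15_general hk hkn G hsys hmds lmax hlmax
end

section
/- Let G ∈ F_q^{2×n} be a systematic MDS matrix with n ≥ 4. Then the 2-dimensional Lebesgue measure of the service rate region Λ(G) ⊆ ℝ² equals (n² + 4n)/8. -/
open Matrix

/-!
For a systematic MDS matrix with systematic columns `c 0, c 1`, a set `R` recovers object `i`
exactly when `c i ∈ R` or `#R ≥ 2`. Hence every unit of rate of object `i` occupies at least two
units of server capacity, except for the at most one unit served through `c i`. Summing the
capacity `∑ |R| x_{i,R} ≤ n` gives the three constraints of a pentagon. Conversely every point of
that pentagon is served by using `c i` for object `i`, pairs `{c j, o}` through the other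
systematic node while it has spare capacity, and all pairs of the `n - 2` remaining nodes evenly
for the rest. The pentagon has area `(n² + 4n)/8`.
-/

section Volume

open MeasureTheory Set

theorem volume_subgraph_Icc {f : ℝ → ℝ} (hf : Continuous f) {a b : ℝ} (hab : a ≤ b)
    (hf0 : ∀ x ∈ Icc a b, 0 ≤ f x) :
    volume {p : ℝ × ℝ | p.1 ∈ Icc a b ∧ p.2 ∈ Icc 0 (f p.1)} =
      ENNReal.ofReal (∫ x in a..b, f x) := by
  have hslice : ∀ x, volume (Prod.mk x ⁻¹' {p : ℝ × ℝ | p.1 ∈ Icc a b ∧ p.2 ∈ Icc 0 (f p.1)}) =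
      (Icc a b).indicator (fun x => ENNReal.ofReal (f x)) x := by
    intro x
    by_cases hx : x ∈ Icc a b
    · rw [indicator_of_mem hx, ← sub_zero (f x), ← Real.volume_Icc]
      congr 1
      ext y
      simp [hx.1, hx.2]
    · rw [indicator_of_notMem hx, ← (measure_empty : volume (∅ : Set ℝ) = 0)]
      congr 1
      ext y
      simp only [mem_preimage, mem_ofPred_eq, mem_empty_iff_false, iff_false]
      exact fun h => hx h.1
  rw [Measure.volume_eq_prod, Measure.prod_apply (measurableSet_region_between_cc
      measurable_const hf.measurable measurableSet_Icc), lintegral_congr hslice,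
    lintegral_indicator measurableSet_Icc, ← ofReal_integral_eq_lintegral_ofReal
      hf.integrableOn_Icc ((ae_restrict_iff' measurableSet_Icc).2 (ae_of_all _ hf0)),
    integral_Icc_eq_integral_Ioc, intervalIntegral.integral_of_le hab]

theorem integral_eq_of_eqOn_affine {f : ℝ → ℝ} {a b c d : ℝ} (hab : a ≤ b)
    (hf : ∀ x ∈ Icc a b, f x = c + d * x) :
    ∫ x in a..b, f x = c * (b - a) + d * (b ^ 2 - a ^ 2) / 2 := by
  have hd : IntervalIntegrable (fun x => d * x) volume a b :=
    (continuous_const.mul continuous_id).intervalIntegrable a b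
  rw [intervalIntegral.integral_congr fun x hx => hf x (uIcc_of_le hab ▸ hx),
    intervalIntegral.integral_add intervalIntegrable_const hd, intervalIntegral.integral_const,
    intervalIntegral.integral_const_mul, integral_id, smul_eq_mul]
  ring

def pentagon (N : ℝ) : Set (Fin 2 → ℝ) :=
  {l | 0 ≤ l 0 ∧ 0 ≤ l 1 ∧ l 0 + l 1 ≤ (N + 2) / 2 ∧ 2 * l 0 + l 1 ≤ N + 1 ∧
    l 0 + 2 * l 1 ≤ N + 1}

noncomputable def pentagonHeight (N z : ℝ) : ℝ :=
  min (min ((N + 2) / 2 - z) (N + 1 - 2 * z)) ((N + 1 - z) / 2)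

theorem continuous_pentagonHeight (N : ℝ) : Continuous (pentagonHeight N) := by
  unfold pentagonHeight
  fun_prop

theorem pentagon_eq_preimage (N : ℝ) : pentagon N = MeasurableEquiv.finTwoArrow ⁻¹'
    {p : ℝ × ℝ | p.1 ∈ Icc 0 ((N + 1) / 2) ∧ p.2 ∈ Icc 0 (pentagonHeight N p.1)} := by
  ext l
  simp only [pentagon, pentagonHeight, mem_preimage, MeasurableEquiv.finTwoArrow_apply,
    mem_ofPred_eq, mem_Icc, le_min_iff]
  constructor
  · rintro ⟨h0, h1, h2, h3, h4⟩
    exact ⟨⟨h0, by linarith⟩, h1, ⟨by linarith, by linarith⟩, by linarith⟩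
  · rintro ⟨⟨h0, -⟩, h1, ⟨h2, h3⟩, h4⟩
    exact ⟨h0, h1, by linarith, by linarith, by linarith⟩

theorem integral_pentagonHeight {N : ℝ} (hN : 2 ≤ N) :
    ∫ z in (0 : ℝ)..((N + 1) / 2), pentagonHeight N z = (N ^ 2 + 4 * N) / 8 := by
  have hii (a b : ℝ) : IntervalIntegrable (pentagonHeight N) volume a b :=
    (continuous_pentagonHeight N).intervalIntegrable a b
  rw [← intervalIntegral.integral_add_adjacent_intervals (hii 0 1) (hii 1 _),
    ← intervalIntegral.integral_add_adjacent_intervals (hii 1 (N / 2)) (hii _ _),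
    integral_eq_of_eqOn_affine (c := (N + 1) / 2) (d := -1 / 2) zero_le_one,
    integral_eq_of_eqOn_affine (c := (N + 2) / 2) (d := -1) (by linarith),
    integral_eq_of_eqOn_affine (c := N + 1) (d := -2) (by linarith)]
  · ring
  all_goals
    rintro z ⟨h0, h1⟩
    simp only [pentagonHeight, min_def]
    split_ifs <;> linarith

theorem volume_pentagon {N : ℝ} (hN : 2 ≤ N) :
    volume (pentagon N) = ENNReal.ofReal ((N ^ 2 + 4 * N) / 8) := by
  rw [pentagon_eq_preimage, (volume_preserving_finTwoArrow ℝ).measure_preimage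
      (measurableSet_region_between_cc measurable_const
        (continuous_pentagonHeight N).measurable measurableSet_Icc).nullMeasurableSet,
    volume_subgraph_Icc (continuous_pentagonHeight N) (by linarith) fun z ⟨h0, h1⟩ => by
      simp only [pentagonHeight, le_min_iff]; refine ⟨⟨?_, ?_⟩, ?_⟩ <;> linarith,
    integral_pentagonHeight hN]

end Volume

open Finset

section Recovery

variable {F : Type} [Field F] {k n : ℕ} {G : Matrix (Fin k) (Fin n) F}

theorem not_isRecoverySet_empty (i : Fin k) : ¬ IsRecoverySet G i ∅ := by
  simp [IsRecoverySet]

theorem isRecoverySet_of_linearIndependent {S R : Finset (Fin n)}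
    (hS : LinearIndependent F (fun ν : {x // x ∈ S} => matCol G ν.1)) (hcard : #S = k)
    (hSR : S ⊆ R) (i : Fin k) : IsRecoverySet G i R := by
  have : Nonempty {x // x ∈ S} := (card_pos.1 (hcard ▸ i.pos)).to_subtype
  have htop := hS.span_eq_top_of_card_eq_finrank (by simp [hcard])
  refine Submodule.span_mono ?_ (htop ▸ Submodule.mem_top)
  rintro _ ⟨ν, rfl⟩
  exact ⟨ν, hSR ν.2, rfl⟩

theorem isRecoverySet_iff {c : Fin k → Fin n} (hsys : ∀ j, matCol G (c j) = Pi.single j 1)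
    (hmds : ∀ S : Finset (Fin n), #S = k →
      LinearIndependent F (fun ν : {x // x ∈ S} => matCol G ν.1))
    (i : Fin k) (R : Finset (Fin n)) :
    IsRecoverySet G i R ↔ c i ∈ R ∨ k ≤ #R := by
  refine ⟨fun h => ?_, ?_⟩
  · by_contra! hR
    have hc : Function.Injective c := fun j j' h => by
      by_contra hne
      have := congrFun ((hsys j).symm.trans (h ▸ hsys j')) j
      rw [Pi.single_eq_same, Pi.single_eq_of_ne hne] at this
      exact one_ne_zero this
    obtain ⟨S, hS, hcard⟩ := exists_superset_card_eq (s := insert (c i) R)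
      ((card_insert_le _ _).trans hR.2) (by simpa using Fintype.card_le_of_injective c hc)
    refine (hmds S hcard).notMem_span_image (s := {ν | ν.1 ∈ R})
      (x := ⟨c i, hS (mem_insert_self _ _)⟩) (by simpa using hR.1) ?_
    rw [IsRecoverySet, ← hsys i] at h
    convert h using 2
    ext v
    simp only [Set.mem_image, Set.mem_ofPred_eq, Subtype.exists, exists_and_left, exists_prop,
      SetLike.mem_coe]
    exact ⟨fun ⟨a, ha, _, hv⟩ => ⟨a, ha, hv⟩,
      fun ⟨a, ha, hv⟩ => ⟨a, ha, hS (mem_insert_of_mem ha), hv⟩⟩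
  · rintro (h | h)
    · rw [IsRecoverySet, ← hsys i]
      exact Submodule.subset_span ⟨c i, h, rfl⟩
    · obtain ⟨S, hSR, hcard⟩ := exists_subset_card_eq h
      exact isRecoverySet_of_linearIndependent (hmds S hcard) hcard hSR i

end Recovery

section Allocation

variable {F : Type} [Field F] {k n : ℕ}

def load (x : Fin k → Finset (Fin n) → ℝ) (ν : Fin n) : ℝ :=
  ∑ i, ∑ R : Finset (Fin n), if ν ∈ R then x i R else 0

theorem load_add (x y : Fin k → Finset (Fin n) → ℝ) (ν : Fin n) :
    load (x + y) ν = load x ν + load y ν := by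
  simp only [load, ← sum_add_distrib, Pi.add_apply, ite_add_zero]

theorem sum_load (x : Fin k → Finset (Fin n) → ℝ) :
    ∑ ν, load x ν = ∑ i, ∑ R : Finset (Fin n), (#R : ℝ) * x i R := by
  simp only [load]
  rw [sum_comm]
  refine sum_congr rfl fun i _ => ?_
  rw [sum_comm]
  simp [sum_ite_mem]

theorem sum_sum_card_mul_le {x : Fin k → Finset (Fin n) → ℝ} (hload : ∀ ν, load x ν ≤ 1) :
    ∑ i, ∑ R : Finset (Fin n), (#R : ℝ) * x i R ≤ n :=
  calc _ = ∑ ν, load x ν := (sum_load x).symm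
    _ ≤ ∑ _ν : Fin n, (1 : ℝ) := sum_le_sum fun ν _ => hload ν
    _ = n := by simp

theorem sum_ite_mem_le_load {x : Fin k → Finset (Fin n) → ℝ} (hx : ∀ i R, 0 ≤ x i R)
    (i : Fin k) (ν : Fin n) : ∑ R : Finset (Fin n), (if ν ∈ R then x i R else 0) ≤ load x ν :=
  single_le_sum (f := fun i => ∑ R : Finset (Fin n), if ν ∈ R then x i R else 0)
    (fun j _ => sum_nonneg fun R _ => by split_ifs <;> simp [hx]) (mem_univ i)

def IsAllocation (G : Matrix (Fin k) (Fin n) F) (x : Fin k → Finset (Fin n) → ℝ) : Prop :=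
  ∀ i R, 0 ≤ x i R ∧ (¬ IsRecoverySet G i R → x i R = 0)

variable {G : Matrix (Fin k) (Fin n) F} {x y : Fin k → Finset (Fin n) → ℝ}

theorem IsAllocation.add (hx : IsAllocation G x) (hy : IsAllocation G y) :
    IsAllocation G (x + y) := fun i R =>
  ⟨add_nonneg (hx i R).1 (hy i R).1, fun h => by simp [(hx i R).2 h, (hy i R).2 h]⟩

theorem mem_SRRG_iff {lam : Fin k → ℝ} :
    lam ∈ SRRG G ↔
      ∃ x, IsAllocation G x ∧ (∀ ν, load x ν ≤ 1) ∧ (fun i => ∑ R, x i R) = lam :=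
  ⟨fun ⟨x, hx0, hx, hsum, hload⟩ => ⟨x, fun i R => ⟨hx0 i R, hx i R⟩, hload, funext hsum⟩,
    fun ⟨x, hx, hload, hsum⟩ =>
      ⟨x, fun i R => (hx i R).1, fun i R => (hx i R).2, congrFun hsum, hload⟩⟩

def familyAlloc {ι : Type*} (i : Fin k) (I : Finset ι) (S : ι → Finset (Fin n)) (d : ℝ) :
    Fin k → Finset (Fin n) → ℝ :=
  fun j R => if j = i then ∑ t ∈ I, if S t = R then d else 0 else 0

variable {ι : Type*} {i : Fin k} {I : Finset ι} {S : ι → Finset (Fin n)} {d : ℝ}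

theorem isAllocation_familyAlloc (hd : 0 ≤ d) (hS : ∀ t ∈ I, IsRecoverySet G i (S t)) :
    IsAllocation G (familyAlloc i I S d) := by
  intro j R
  refine ⟨?_, fun hR => ?_⟩
  · unfold familyAlloc
    split_ifs
    · exact sum_nonneg fun t _ => by split_ifs <;> simp [hd]
    · exact le_rfl
  · unfold familyAlloc
    split_ifs with hj
    · subst hj
      exact sum_eq_zero fun t ht => if_neg fun h : S t = R => hR (h ▸ hS t ht)
    · rfl

theorem sum_familyAlloc (j : Fin k) :
    ∑ R : Finset (Fin n), familyAlloc i I S d j R = if j = i then #I * d else 0 := by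
  unfold familyAlloc
  split_ifs
  · rw [sum_comm]; simp
  · simp

theorem load_familyAlloc (ν : Fin n) :
    load (familyAlloc i I S d) ν = #{t ∈ I | ν ∈ S t} * d := by
  rw [load, Fintype.sum_eq_single i fun j hj => by simp [familyAlloc, hj]]
  have h : ∀ R : Finset (Fin n), (if ν ∈ R then ∑ t ∈ I, (if S t = R then d else 0) else 0) =
      ∑ t ∈ I, if ν ∈ R ∧ S t = R then d else 0 := fun R => by
    split_ifs with hν <;> simp [hν]
  simp only [familyAlloc, if_true, h]
  rw [sum_comm, card_filter, Nat.cast_sum, sum_mul]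
  refine sum_congr rfl fun t _ => ?_
  simp only [and_comm, ite_and, sum_ite_eq, mem_univ, if_true]
  split_ifs <;> simp

end Allocation

section Counting

variable {α : Type*}

theorem cast_card_offDiag (O : Finset α) : (#O.offDiag : ℝ) = #O * (#O - 1) := by
  rw [offDiag_card, Nat.cast_sub (Nat.le_mul_self _), Nat.cast_mul]
  ring

variable [DecidableEq α]

theorem card_filter_mem_pair_offDiag (O : Finset α) (ν : α) :
    #{p ∈ O.offDiag | ν ∈ ({p.1, p.2} : Finset α)} = if ν ∈ O then 2 * (#O - 1) else 0 := by
  split_ifs with hν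
  · have : {p ∈ O.offDiag | ν ∈ ({p.1, p.2} : Finset α)} =
        {ν} ×ˢ O.erase ν ∪ O.erase ν ×ˢ {ν} := by
      ext ⟨a, b⟩
      simp only [mem_filter, mem_offDiag, mem_insert, mem_singleton, mem_union, mem_product,
        mem_erase]
      grind
    rw [this, card_union_of_disjoint (disjoint_left.2 fun p h₁ h₂ =>
        (mem_erase.1 (mem_product.1 h₂).1).1 (mem_singleton.1 (mem_product.1 h₁).1)),
      card_product, card_product, card_singleton, card_erase_of_mem hν]
    ring
  · rw [card_eq_zero, filter_eq_empty_iff]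
    intro p hp
    simp only [mem_offDiag] at hp
    simp only [mem_insert, mem_singleton]
    rintro (rfl | rfl) <;> tauto

theorem card_filter_mem_insert {O : Finset α} {c : α} (hc : c ∉ O) (ν : α) :
    #{o ∈ O | ν ∈ ({c, o} : Finset α)} = if ν = c then #O else if ν ∈ O then 1 else 0 := by
  split_ifs with h₁ h₂
  · subst h₁; simp
  · rw [card_eq_one]
    refine ⟨ν, ?_⟩
    ext o
    simp only [mem_filter, mem_insert, mem_singleton]
    grind
  · rw [card_eq_zero, filter_eq_empty_iff]
    simp only [mem_insert, mem_singleton]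
    grind

end Counting

section UpperBound

variable {F : Type} [Field F] {k n : ℕ} {G : Matrix (Fin k) (Fin n) F}
  {x : Fin k → Finset (Fin n) → ℝ} {c : Fin k → Fin n}

theorem IsAllocation.sum_le_sum_card_mul (hx : IsAllocation G x) (i : Fin k) :
    ∑ R, x i R ≤ ∑ R : Finset (Fin n), #R * x i R := by
  refine sum_le_sum fun R _ => ?_
  rcases R.eq_empty_or_nonempty with rfl | hR
  · simp [(hx i ∅).2 (not_isRecoverySet_empty i)]
  · exact le_mul_of_one_le_left (hx i R).1 (by exact_mod_cast hR.card_pos)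

theorem IsAllocation.two_mul_sum_sub_load_le (hx : IsAllocation G x)
    (hrec : ∀ i R, IsRecoverySet G i R → c i ∈ R ∨ 2 ≤ #R) (i : Fin k) :
    2 * ∑ R, x i R - load x (c i) ≤ ∑ R : Finset (Fin n), #R * x i R := by
  have hpt (R : Finset (Fin n)) : 2 * x i R - (if c i ∈ R then x i R else 0) ≤ #R * x i R := by
    by_cases h0 : x i R = 0
    · simp [h0]
    have hx0 := (hx i R).1
    rcases hrec i R (not_not.1 (mt (hx i R).2 h0)) with h | h
    · have : (1 : ℝ) ≤ #R := by exact_mod_cast card_pos.2 ⟨_, h⟩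
      rw [if_pos h]
      nlinarith
    · have : (2 : ℝ) ≤ #R := by exact_mod_cast h
      split_ifs <;> nlinarith
  calc 2 * ∑ R, x i R - load x (c i)
      ≤ ∑ R : Finset (Fin n), (2 * x i R - if c i ∈ R then x i R else 0) := by
        rw [sum_sub_distrib, ← mul_sum]
        linarith [sum_ite_mem_le_load (fun j R => (hx j R).1) i (c i)]
    _ ≤ _ := sum_le_sum fun R _ => hpt R

end UpperBound

theorem SRRG_subset_pentagon {F : Type} [Field F] {n : ℕ} {G : Matrix (Fin 2) (Fin n) F}
    (c : Fin 2 → Fin n) (hrec : ∀ i R, IsRecoverySet G i R → c i ∈ R ∨ 2 ≤ #R) :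
    SRRG G ⊆ pentagon n := by
  intro lam hlam
  obtain ⟨x, hx, hload, rfl⟩ := mem_SRRG_iff.1 hlam
  have htot := sum_sum_card_mul_le hload
  rw [Fin.sum_univ_two] at htot
  have := hx.sum_le_sum_card_mul 0
  have := hx.sum_le_sum_card_mul 1
  have := hx.two_mul_sum_sub_load_le hrec 0
  have := hx.two_mul_sum_sub_load_le hrec 1
  have := hload (c 0)
  have := hload (c 1)
  exact ⟨sum_nonneg fun R _ => (hx 0 R).1, sum_nonneg fun R _ => (hx 1 R).1,
    by linarith, by linarith, by linarith⟩

section LowerBound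

variable {F : Type} [Field F] {n : ℕ} {G : Matrix (Fin 2) (Fin n) F} {c : Fin 2 → Fin n}
  {s t w₀ w₁ u₀ u₁ : ℝ}

def otherNodes (c : Fin 2 → Fin n) : Finset (Fin n) := {c 0, c 1}ᶜ

theorem mem_otherNodes {ν : Fin n} : ν ∈ otherNodes c ↔ ν ≠ c 0 ∧ ν ≠ c 1 := by
  simp [otherNodes]

theorem card_otherNodes (hc : c 0 ≠ c 1) : #(otherNodes c) = n - 2 := by
  rw [otherNodes, card_compl, card_pair hc, Fintype.card_fin]

/-- Spreading `w₀, w₁, u₀, u₁` evenly over their families puts the same load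
`(w₀ + w₁ + 2 * (u₀ + u₁)) / (n - 2)` on every node of `otherNodes c`. -/
noncomputable def pairAlloc (c : Fin 2 → Fin n) (s t w₀ w₁ u₀ u₁ : ℝ) :
    Fin 2 → Finset (Fin n) → ℝ :=
  familyAlloc 0 {c 0} (fun o => {o}) s + familyAlloc 1 {c 1} (fun o => {o}) t +
    familyAlloc 0 (otherNodes c) (fun o => {c 1, o}) (w₀ / #(otherNodes c)) +
    familyAlloc 1 (otherNodes c) (fun o => {c 0, o}) (w₁ / #(otherNodes c)) +
    familyAlloc 0 (otherNodes c).offDiag (fun p => {p.1, p.2}) (u₀ / #(otherNodes c).offDiag) +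
    familyAlloc 1 (otherNodes c).offDiag (fun p => {p.1, p.2}) (u₁ / #(otherNodes c).offDiag)

theorem isAllocation_pairAlloc (hrec : ∀ i R, c i ∈ R ∨ 2 ≤ #R → IsRecoverySet G i R)
    (hs : 0 ≤ s) (ht : 0 ≤ t) (hw₀ : 0 ≤ w₀) (hw₁ : 0 ≤ w₁) (hu₀ : 0 ≤ u₀) (hu₁ : 0 ≤ u₁) :
    IsAllocation G (pairAlloc c s t w₀ w₁ u₀ u₁) := by
  have hsingle : ∀ i, ∀ o ∈ ({c i} : Finset (Fin n)), IsRecoverySet G i {o} := fun i o ho =>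
    hrec i _ (Or.inl (by simp [mem_singleton.1 ho]))
  have hpair : ∀ i, ∀ a b : Fin n, a ≠ b → IsRecoverySet G i {a, b} :=
    fun i a b hab => hrec i _ (Or.inr (card_pair hab).ge)
  refine (((((isAllocation_familyAlloc hs (hsingle 0)).add
    (isAllocation_familyAlloc ht (hsingle 1))).add
    (isAllocation_familyAlloc (by positivity) ?_)).add
    (isAllocation_familyAlloc (by positivity) ?_)).add
    (isAllocation_familyAlloc (by positivity) ?_)).add
    (isAllocation_familyAlloc (by positivity) ?_)
  · exact fun o ho => hpair 0 _ _ fun h => (mem_otherNodes.1 ho).2 h.symm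
  · exact fun o ho => hpair 1 _ _ fun h => (mem_otherNodes.1 ho).1 h.symm
  · exact fun p hp => hpair 0 _ _ (mem_offDiag.1 hp).2.2
  · exact fun p hp => hpair 1 _ _ (mem_offDiag.1 hp).2.2

theorem sum_pairAlloc (hn : 4 ≤ n) (hc : c 0 ≠ c 1) (i : Fin 2) :
    ∑ R, pairAlloc c s t w₀ w₁ u₀ u₁ i R = ![s + w₀ + u₀, t + w₁ + u₁] i := by
  have hm : (2 : ℝ) ≤ #(otherNodes c) := by
    rw [card_otherNodes hc]; exact_mod_cast (by omega : 2 ≤ n - 2)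
  have hoff : (#(otherNodes c).offDiag : ℝ) ≠ 0 := by
    rw [cast_card_offDiag]; nlinarith
  simp only [pairAlloc, Pi.add_apply, sum_add_distrib, sum_familyAlloc,
    mul_div_cancel₀ _ (by linarith : (#(otherNodes c) : ℝ) ≠ 0), mul_div_cancel₀ _ hoff]
  fin_cases i <;> simp

theorem load_pairAlloc_le (hn : 4 ≤ n) (hc : c 0 ≠ c 1) (hc₀ : s + w₁ ≤ 1) (hc₁ : t + w₀ ≤ 1)
    (hO : w₀ + w₁ + 2 * (u₀ + u₁) ≤ n - 2) (ν : Fin n) :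
    load (pairAlloc c s t w₀ w₁ u₀ u₁) ν ≤ 1 := by
  have hm : (#(otherNodes c) : ℝ) = n - 2 := by
    rw [card_otherNodes hc, Nat.cast_sub (by omega)]; norm_num
  have hm1 : ((#(otherNodes c) - 1 : ℕ) : ℝ) = #(otherNodes c) - 1 := by
    rw [Nat.cast_sub (by rw [card_otherNodes hc]; omega), Nat.cast_one]
  have hn' : (4 : ℝ) ≤ n := by exact_mod_cast hn
  have h2 : (n : ℝ) - 2 ≠ 0 := by linarith
  have h3 : (n : ℝ) - 2 - 1 ≠ 0 := by linarith
  have hcO : ∀ i, c i ∉ otherNodes c := fun i => by fin_cases i <;> simp [mem_otherNodes]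
  simp only [pairAlloc, load_add, load_familyAlloc, card_filter_mem_pair_offDiag,
    card_filter_mem_insert (hcO _), cast_card_offDiag]
  by_cases h0 : ν = c 0
  · subst h0
    simpa [filter_singleton, hc, hcO, hm, mul_div_cancel₀ _ h2] using hc₀
  by_cases h1 : ν = c 1
  · subst h1
    simpa [filter_singleton, hc.symm, hcO, hm, mul_div_cancel₀ _ h2] using hc₁
  have hν : ν ∈ otherNodes c := mem_otherNodes.2 ⟨h0, h1⟩
  have : (w₀ + w₁ + 2 * (u₀ + u₁)) / (n - 2) ≤ 1 := (div_le_one (by linarith)).2 hO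
  convert this using 1
  simp only [filter_singleton, mem_singleton, h0, h1, hν, if_false, if_true, card_empty,
    Nat.cast_zero, Nat.cast_one, Nat.cast_mul, Nat.cast_ofNat, hm1, hm]
  field_simp
  ring

theorem pentagon_subset_SRRG (hn : 4 ≤ n) (hc : c 0 ≠ c 1)
    (hrec : ∀ i R, c i ∈ R ∨ 2 ≤ #R → IsRecoverySet G i R) : pentagon n ⊆ SRRG G := by
  rintro l ⟨ha, hb, hab, h2ab, ha2b⟩
  have hn' : (4 : ℝ) ≤ n := by exact_mod_cast hn
  let s := min (l 0) 1
  let t := min (l 1) 1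
  let w₀ := min (l 0 - s) (1 - t)
  let w₁ := min (l 1 - t) (1 - s)
  refine mem_SRRG_iff.2 ⟨pairAlloc c s t w₀ w₁ (l 0 - s - w₀) (l 1 - t - w₁),
    isAllocation_pairAlloc hrec ?_ ?_ ?_ ?_ ?_ ?_, load_pairAlloc_le hn hc ?_ ?_ ?_,
    funext fun i => by rw [sum_pairAlloc hn hc]; fin_cases i <;> simp⟩
  all_goals simp only [s, t, w₀, w₁, min_def]; split_ifs <;> linarith

end LowerBound

theorem stmt16 {F : Type} [Field F] {n : ℕ} (hn : 4 ≤ n)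
    (G : Matrix (Fin 2) (Fin n) F)
    -- `G` is systematic: its first `2` columns form the identity matrix
    (hsys : ∀ j : Fin 2, matCol G (Fin.castLE (by omega) j) = Pi.single j 1)
    -- `G` is MDS: every `2` columns are linearly independent
    (hmds : ∀ S : Finset (Fin n), S.card = 2 →
      LinearIndependent F (fun ν : {x : Fin n // x ∈ S} => matCol G ν.1)) :
    MeasureTheory.volume (SRRG G) =
      ENNReal.ofReal (((n : ℝ) ^ 2 + 4 * (n : ℝ)) / 8) := by
  have hrec := isRecoverySet_iff hsys hmds
  have hc : Fin.castLE (by omega : 2 ≤ n) 0 ≠ Fin.castLE (by omega : 2 ≤ n) 1 :=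
    (Fin.castLE_injective _).ne (by decide)
  rw [(SRRG_subset_pentagon _ fun i R => (hrec i R).1).antisymm
    (pentagon_subset_SRRG hn hc fun i R => (hrec i R).2)]
  exact volume_pentagon (by exact_mod_cast (by omega : 2 ≤ n))
end

section
/- Suppose n ≥ 2k and let G ∈ F_q^{k×n} be a systematic MDS matrix. Then the max-sum capacity of the service rate region satisfies λ(G) = k + (n − k)/k, where λ(G) = max{ λ_1 + ... + λ_k : (λ_1,...,λ_k) ∈ Λ(G) }. -/
open Matrix

/-!
Upper bound by weak LP duality: give each systematic node weight `1` and every other node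
weight `1 / k`. A recovery set for object `i` either contains the systematic node of `i` or,
by the MDS property, has at least `k` nodes, so it has total weight at least `1`; hence the
sum of a service rate vector is at most the total weight `k + (n - k) / k`.

Lower bound: serve every object from its systematic node at rate `1`, and one object in
addition from the `n - k` cyclic windows of `k` consecutive non-systematic nodes at rate
`1 / k` each. Any `k` columns span `F^k`, so every window is a recovery set, and each
non-systematic node lies in at most `k` windows. Since `n - k ≥ k`, a window has `k` distinct
nodes.
-/

open Finset

def IsMDS {F : Type} [Field F] {k n : ℕ} (G : Matrix (Fin k) (Fin n) F) : Prop :=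
  ∀ S : Finset (Fin n), S.card = k →
    LinearIndependent F (fun ν : {x : Fin n // x ∈ S} => matCol G ν.1)

def IsSystematic {F : Type} [Field F] {k n : ℕ} (hkn : k ≤ n)
    (G : Matrix (Fin k) (Fin n) F) : Prop :=
  ∀ j : Fin k, matCol G (Fin.castLE hkn j) = Pi.single j 1

def cyclicWindow (k : ℕ) {m : ℕ} (j : ZMod m) : Finset (ZMod m) :=
  univ.image fun t : Fin k => j + (t : ℕ)

theorem card_cyclicWindow {k m : ℕ} (hkm : k ≤ m) (j : ZMod m) :
    (cyclicWindow k j).card = k := by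
  have hinj : Function.Injective fun t : Fin k => j + ((t : ℕ) : ZMod m) := by
    intro s t hst
    have hval := congrArg ZMod.val (add_left_cancel hst)
    rwa [ZMod.val_cast_of_lt (s.2.trans_le hkm), ZMod.val_cast_of_lt (t.2.trans_le hkm),
      Fin.val_inj] at hval
  rw [cyclicWindow, card_image_of_injective _ hinj, card_univ, Fintype.card_fin]

theorem card_filter_mem_cyclicWindow_le {k m : ℕ} [NeZero m] (a : ZMod m) :
    #{j | a ∈ cyclicWindow k j} ≤ k := by
  calc #{j | a ∈ cyclicWindow k j} ≤ #(univ.image fun t : Fin k => a - (t : ℕ)) := by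
        refine card_le_card fun j hj => ?_
        obtain ⟨t, -, ht⟩ := mem_image.mp (mem_filter.mp hj).2
        exact mem_image.mpr ⟨t, mem_univ _, by rw [← ht]; ring⟩
    _ ≤ k := card_image_le.trans (by simp)

def parityNode (k n : ℕ) [NeZero (n - k)] : ZMod (n - k) ↪ Fin n where
  toFun a := ⟨k + a.val, by have := ZMod.val_lt a; omega⟩
  inj' a b h := ZMod.val_injective _ (by simpa using h)

@[simp]
theorem val_parityNode {k n : ℕ} [NeZero (n - k)] (a : ZMod (n - k)) :
    (parityNode k n a : ℕ) = k + a.val :=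
  rfl

theorem exists_parityNode_eq {k n : ℕ} [NeZero (n - k)] {ν : Fin n} (hν : k ≤ ν) :
    ∃ a, parityNode k n a = ν :=
  ⟨((ν - k : ℕ) : ZMod (n - k)), Fin.ext <| by
    rw [val_parityNode, ZMod.val_cast_of_lt (by omega)]
    omega⟩

section

variable {F : Type} [Field F] {k n : ℕ} {G : Matrix (Fin k) (Fin n) F}

theorem IsMDS.linearIndepOn (hG : IsMDS G) (hkn : k ≤ n) {S : Finset (Fin n)}
    (hS : S.card ≤ k) : LinearIndepOn F (matCol G) (S : Set (Fin n)) := by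
  obtain ⟨T, hST, hT⟩ := exists_superset_card_eq hS (by simpa using hkn)
  exact LinearIndepOn.mono (hG T hT) (coe_subset.mpr hST)

theorem IsMDS.span_eq_top (hG : IsMDS G) {S : Finset (Fin n)} (hS : S.card = k) :
    Submodule.span F (matCol G '' S) = ⊤ := by
  rcases k.eq_zero_or_pos with rfl | hk
  · exact Subsingleton.elim _ _
  have : Nonempty S := by
    obtain ⟨ν, hν⟩ := card_pos.mp (hS ▸ hk)
    exact ⟨⟨ν, hν⟩⟩
  rw [Set.image_eq_range]
  exact (hG S hS).span_eq_top_of_card_eq_finrank (by simp [hS])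

theorem IsMDS.isRecoverySet (hG : IsMDS G) {S : Finset (Fin n)} (hS : S.card = k) (i : Fin k) :
    IsRecoverySet G i S := by
  simp only [IsRecoverySet, hG.span_eq_top hS, Submodule.mem_top]

theorem IsMDS.le_card_of_mem_span (hG : IsMDS G) (hkn : k ≤ n) {ν : Fin n}
    {R : Finset (Fin n)} (hν : ν ∉ R) (hmem : matCol G ν ∈ Submodule.span F (matCol G '' R)) :
    k ≤ R.card := by
  by_contra! hR
  have hind := hG.linearIndepOn hkn (S := insert ν R) (by rw [card_insert_of_notMem hν]; omega)
  rw [coe_insert, linearIndepOn_insert (by simpa using hν)] at hind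
  exact hind.2 hmem

theorem IsSystematic.isRecoverySet_singleton {hkn : k ≤ n} (hG : IsSystematic hkn G)
    (i : Fin k) : IsRecoverySet G i {Fin.castLE hkn i} :=
  Submodule.subset_span ⟨_, by simp, hG i⟩

theorem sum_le_sum_of_mem_SRRG (y : Fin n → ℝ) (hy : ∀ ν, 0 ≤ y ν)
    (hcover : ∀ i R, IsRecoverySet G i R → 1 ≤ ∑ ν ∈ R, y ν) {lam : Fin k → ℝ}
    (hlam : lam ∈ SRRG G) : ∑ i, lam i ≤ ∑ ν, y ν := by
  obtain ⟨x, hx0, hxrec, hxsum, hxload⟩ := hlam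
  calc ∑ i, lam i = ∑ i, ∑ R, x i R := by simp only [hxsum]
    _ ≤ ∑ i, ∑ R, (∑ ν ∈ R, y ν) * x i R := by
        gcongr with i _ R _
        by_cases hR : IsRecoverySet G i R
        · exact le_mul_of_one_le_left (hx0 i R) (hcover i R hR)
        · simp [hxrec i R hR]
    _ = ∑ i, ∑ R, ∑ ν, if ν ∈ R then y ν * x i R else 0 := by
        simp only [sum_ite_mem, univ_inter, sum_mul]
    _ = ∑ ν, y ν * ∑ i, ∑ R, if ν ∈ R then x i R else 0 := by
        simp only [mul_sum, mul_ite, mul_zero]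
        exact (sum_congr rfl fun i _ => sum_comm).trans sum_comm
    _ ≤ ∑ ν, y ν * 1 := by
        gcongr with ν
        · exact hy ν
        · exact hxload ν
    _ = ∑ ν, y ν := by simp only [mul_one]

theorem exists_mem_SRRG_of_schedule {J : Type} [Fintype J] (obj : J → Fin k)
    (S : J → Finset (Fin n)) (rate : J → ℝ) (hrate : ∀ j, 0 ≤ rate j)
    (hrec : ∀ j, IsRecoverySet G (obj j) (S j))
    (hload : ∀ ν, ∑ j, (if ν ∈ S j then rate j else 0) ≤ 1) :
    ∃ lam ∈ SRRG G, ∑ i, lam i = ∑ j, rate j := by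
  classical
  have hfiber (f : J → ℝ) : ∑ i, ∑ R, ∑ j with (obj j, S j) = (i, R), f j = ∑ j, f j := by
    rw [← Fintype.sum_prod_type' fun i R => ∑ j with (obj j, S j) = (i, R), f j]
    exact sum_fiberwise univ _ f
  set x : Fin k → Finset (Fin n) → ℝ := fun i R => ∑ j with (obj j, S j) = (i, R), rate j
  refine ⟨fun i => ∑ R, x i R, ⟨x, ?_, ?_, fun i => rfl, ?_⟩, hfiber rate⟩
  · exact fun i R => sum_nonneg fun j _ => hrate j
  · intro i R hR
    refine sum_eq_zero fun j hj => ?_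
    obtain ⟨rfl, rfl⟩ := Prod.mk.inj (mem_filter.mp hj).2
    exact absurd (hrec j) hR
  · intro ν
    calc ∑ i, ∑ R, (if ν ∈ R then x i R else 0)
        = ∑ i, ∑ R, ∑ j with (obj j, S j) = (i, R), (if ν ∈ S j then rate j else 0) := by
          refine sum_congr rfl fun i _ => sum_congr rfl fun R _ => ?_
          have hS : ∀ j ∈ ({j | (obj j, S j) = (i, R)} : Finset J), S j = R :=
            fun j hj => (Prod.mk.inj (mem_filter.mp hj).2).2
          split_ifs with hνR
          · exact sum_congr rfl fun j hj => by rw [if_pos (hS j hj ▸ hνR)]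
          · exact (sum_eq_zero fun j hj => if_neg (hS j hj ▸ hνR)).symm
      _ = ∑ j, (if ν ∈ S j then rate j else 0) := hfiber _
      _ ≤ 1 := hload ν

theorem sum_le_of_mem_SRRG_s19 (hk : 0 < k) (hkn : k ≤ n) (hsys : IsSystematic hkn G)
    (hmds : IsMDS G) {lam : Fin k → ℝ} (hlam : lam ∈ SRRG G) :
    ∑ i, lam i ≤ k + (n - k) / k := by
  set y : Fin n → ℝ := fun ν => if (ν : ℕ) < k then 1 else 1 / k
  have hk1 : (1 : ℝ) / k ≤ 1 := div_le_one_of_le₀ (by exact_mod_cast hk) (by positivity)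
  have hy (ν : Fin n) : 1 / k ≤ y ν := by
    simp only [y]
    split_ifs
    exacts [hk1, le_rfl]
  have hy0 (ν : Fin n) : 0 ≤ y ν := (by positivity : (0 : ℝ) ≤ 1 / k).trans (hy ν)
  have hcover (i : Fin k) (R : Finset (Fin n)) (hR : IsRecoverySet G i R) :
      1 ≤ ∑ ν ∈ R, y ν := by
    by_cases hi : Fin.castLE hkn i ∈ R
    · calc (1 : ℝ) = y (Fin.castLE hkn i) := by simp [y]
        _ ≤ ∑ ν ∈ R, y ν := single_le_sum (fun ν _ => hy0 ν) hi
    · have hcard : k ≤ R.card := hmds.le_card_of_mem_span hkn hi (by rw [hsys i]; exact hR)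
      calc (1 : ℝ) = k * (1 / k) := by field_simp
        _ ≤ R.card * (1 / k) := by gcongr
        _ = ∑ ν ∈ R, 1 / (k : ℝ) := by simp
        _ ≤ ∑ ν ∈ R, y ν := sum_le_sum fun ν _ => hy ν
  calc ∑ i, lam i ≤ ∑ ν, y ν := sum_le_sum_of_mem_SRRG y hy0 hcover hlam
    _ = ∑ ν ∈ range k, (1 : ℝ) + ∑ ν ∈ Ico k n, 1 / (k : ℝ) := by
        rw [Fin.sum_univ_eq_sum_range (fun ν => if ν < k then (1 : ℝ) else 1 / k) n,
          ← sum_range_add_sum_Ico _ hkn]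
        congr 1
        · exact sum_congr rfl fun ν hν => if_pos (mem_range.mp hν)
        · exact sum_congr rfl fun ν hν => if_neg (mem_Ico.mp hν).1.not_gt
    _ = k + (n - k) / k := by
        rw [sum_const, sum_const, card_range, Nat.card_Ico, nsmul_eq_mul, nsmul_eq_mul,
          Nat.cast_sub hkn]
        ring

theorem exists_mem_SRRG_sum_eq (hk : 0 < k) (hkn : k ≤ n) (hkm : k ≤ n - k)
    (hsys : IsSystematic hkn G) (hmds : IsMDS G) :
    ∃ lam ∈ SRRG G, ∑ i, lam i = k + (n - k) / k := by
  have : NeZero (n - k) := ⟨by omega⟩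
  let obj : Fin k ⊕ ZMod (n - k) → Fin k := Sum.elim id fun _ => ⟨0, hk⟩
  let S : Fin k ⊕ ZMod (n - k) → Finset (Fin n) :=
    Sum.elim (fun i => {Fin.castLE hkn i}) fun j => (cyclicWindow k j).map (parityNode k n)
  let rate : Fin k ⊕ ZMod (n - k) → ℝ := Sum.elim (fun _ => 1) fun _ => 1 / k
  have hrec : ∀ j, IsRecoverySet G (obj j) (S j)
    | .inl i => hsys.isRecoverySet_singleton i
    | .inr j => hmds.isRecoverySet ((card_map _).trans (card_cyclicWindow hkm j)) _
  have hload (ν : Fin n) : ∑ j, (if ν ∈ S j then rate j else 0) ≤ 1 := by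
    rw [Fintype.sum_sum_type]
    rcases lt_or_ge (ν : ℕ) k with hν | hν
    · have hwin (j : ZMod (n - k)) : ν ∉ S (.inr j) := by
        intro h
        obtain ⟨a, -, rfl⟩ := mem_map.mp h
        simp at hν
      have hsing (i : Fin k) : ν ∈ S (.inl i) ↔ (⟨ν, hν⟩ : Fin k) = i := by
        simp [S, Fin.ext_iff, eq_comm]
      simp only [hwin, hsing, if_false, sum_const_zero, add_zero]
      simp [rate]
    · obtain ⟨a, rfl⟩ := exists_parityNode_eq hν
      have hsing (i : Fin k) : parityNode k n a ∉ S (.inl i) := by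
        simp only [S, Sum.elim_inl, mem_singleton, Fin.ext_iff, val_parityNode, Fin.val_castLE]
        omega
      simp only [hsing, if_false, sum_const_zero, zero_add, S, rate, Sum.elim_inr, mem_map']
      rw [← sum_filter, sum_const, nsmul_eq_mul]
      calc (#{j | a ∈ cyclicWindow k j} : ℝ) * (1 / k) ≤ k * (1 / k) := by
            gcongr
            exact_mod_cast card_filter_mem_cyclicWindow_le a
        _ = 1 := by field_simp
  obtain ⟨lam, hlam, hsum⟩ := exists_mem_SRRG_of_schedule obj S rate
    (by rintro (_ | _) <;> simp [rate]) hrec hload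
  refine ⟨lam, hlam, ?_⟩
  rw [hsum, Fintype.sum_sum_type]
  simp only [rate, Sum.elim_inl, Sum.elim_inr, sum_const, card_univ, Fintype.card_fin, ZMod.card,
    nsmul_eq_mul, Nat.cast_sub hkn]
  ring

end

theorem stmt19 {F : Type} [Field F] {k n : ℕ}
    (hk : 2 ≤ k) (hkn : 2 * k ≤ n)
    (G : Matrix (Fin k) (Fin n) F)
    -- `G` is systematic: its first `k` columns form the identity matrix
    (hsys : ∀ j : Fin k, matCol G (Fin.castLE (by omega) j) = Pi.single j 1)
    -- `G` is MDS: every `k` columns are linearly independent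
    (hmds : ∀ S : Finset (Fin n), S.card = k →
      LinearIndependent F (fun ν : {x : Fin n // x ∈ S} => matCol G ν.1))
    -- `lmax = λ(G)`, the max-sum capacity
    (lmax : ℝ) (hlmax : IsGreatest {y : ℝ | ∃ lam ∈ SRRG G, y = ∑ i, lam i} lmax) :
    lmax = (k : ℝ) + ((n : ℝ) - (k : ℝ)) / (k : ℝ) := by
  obtain ⟨lam, hlam, hsum⟩ := exists_mem_SRRG_sum_eq (by omega) (by omega) (by omega) hsys hmds
  refine le_antisymm ?_ (hlmax.2 ⟨lam, hlam, hsum.symm⟩)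
  obtain ⟨lam', hlam', rfl⟩ := hlmax.1
  exact sum_le_of_mem_SRRG_s19 (by omega) (by omega) hsys hmds hlam'
end
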